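/- arXiv:hep-th/0701063 — 14 statements merged into one kernel-verified Lean document; each statement's English description precedes it below -/
import Mathlib

section
/- Let a : ℕ → ℕ be a sequence, and let t ∈ ℂ with |t| < 1 be such that ∑_{n≥1} a(n)·|t|^n converges. Then the family n ↦ (1 − t^n)^{−a(n)} (n ≥ 1) has product equal to exp(∑_{p≥1} (1/p)·∑_{k≥1} a(k)·t^{p·k}); that is, the plethystic exponential of f(t) = ∑_{k≥1} a(k) t^k admits the product representation PE[f](t) = ∏_{n≥1} (1 − t^n)^{−a(n)}. -/
/-!
Taking logarithms turns the product into `∑ₙ -a(n) log (1 - tⁿ) = ∑ₙ ∑ₚ a(n) t^(pn) / p`, by the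
Taylor series of `-log (1 - z)` at `z = tⁿ`. Since `|t^(pn)| ≤ |t|^(n + p - 1)`, the double series
is dominated by `(∑ₙ a(n) |t|ⁿ) · (∑ₚ |t|^p)`, so it converges absolutely and the order of
summation may be exchanged; exponentiating a convergent series gives a convergent product.
-/

open Complex

theorem Complex.exp_intCast_mul_log (n : ℤ) {z : ℂ} (hz : z ≠ 0) :
    cexp (n * log z) = z ^ n := by
  rw [exp_int_mul, exp_log hz]

theorem norm_pow_succ_lt_one {𝕜 : Type*} [NormedDivisionRing 𝕜] {t : 𝕜} (ht : ‖t‖ < 1) (n : ℕ) :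
    ‖t ^ (n + 1)‖ < 1 := by
  rw [norm_pow]
  exact pow_lt_one₀ (norm_nonneg t) ht n.succ_ne_zero

section PlethysticSeries

variable (c : ℕ → ℂ) {t : ℂ}

theorem summable_plethystic_double_series (ht : ‖t‖ < 1)
    (hc : Summable fun n : ℕ => ‖c (n + 1)‖ * ‖t‖ ^ (n + 1)) :
    Summable (Function.uncurry fun k p : ℕ =>
      1 / (p + 1 : ℂ) * (c (k + 1) * t ^ ((p + 1) * (k + 1)))) := by
  have hgeom := summable_geometric_of_lt_one (norm_nonneg t) ht
  refine (hc.mul_of_nonneg hgeom (fun _ => by positivity) (fun _ => by positivity)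
    ).of_norm_bounded ?_
  rintro ⟨k, p⟩
  have hinv : ‖1 / (p + 1 : ℂ)‖ ≤ 1 := by
    rw [norm_div, norm_one, ← Nat.cast_succ, norm_natCast]
    exact div_le_one_of_le₀ (by simp) (by positivity)
  have hpow : ‖t‖ ^ ((p + 1) * (k + 1)) ≤ ‖t‖ ^ (k + 1) * ‖t‖ ^ p := by
    rw [← pow_add]
    exact pow_le_pow_of_le_one (norm_nonneg t) ht.le (by nlinarith)
  simp only [Function.uncurry_apply_pair, norm_mul, norm_pow]
  calc ‖1 / (p + 1 : ℂ)‖ * (‖c (k + 1)‖ * ‖t‖ ^ ((p + 1) * (k + 1)))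
      ≤ 1 * (‖c (k + 1)‖ * (‖t‖ ^ (k + 1) * ‖t‖ ^ p)) := by gcongr
    _ = ‖c (k + 1)‖ * ‖t‖ ^ (k + 1) * ‖t‖ ^ p := by ring

theorem hasSum_plethystic_fiber (ht : ‖t‖ < 1) (k : ℕ) :
    HasSum (fun p : ℕ => 1 / (p + 1 : ℂ) * (c (k + 1) * t ^ ((p + 1) * (k + 1))))
      (-c (k + 1) * log (1 - t ^ (k + 1))) := by
  have hterm (p : ℕ) : c (k + 1) * ((t ^ (k + 1)) ^ (p + 1) / (p + 1))
      = 1 / (p + 1 : ℂ) * (c (k + 1) * t ^ ((p + 1) * (k + 1))) := by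
    rw [← pow_mul, mul_comm (k + 1)]
    ring
  have h := (hasSum_taylorSeries_neg_log' (norm_pow_succ_lt_one ht k)).mul_left (c (k + 1))
  simpa only [hterm, mul_neg, ← neg_mul] using h

theorem hasSum_neg_mul_log_one_sub_pow (ht : ‖t‖ < 1)
    (hc : Summable fun n : ℕ => ‖c (n + 1)‖ * ‖t‖ ^ (n + 1)) :
    HasSum (fun k : ℕ => -c (k + 1) * log (1 - t ^ (k + 1)))
      (∑' p : ℕ, 1 / (p + 1 : ℂ) * ∑' k : ℕ, c (k + 1) * t ^ ((p + 1) * (k + 1))) := by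
  have hdouble := summable_plethystic_double_series c ht hc
  have hfiber := hasSum_plethystic_fiber c ht
  have hswap : ∑' p : ℕ, 1 / (p + 1 : ℂ) * ∑' k : ℕ, c (k + 1) * t ^ ((p + 1) * (k + 1))
      = ∑' k : ℕ, -c (k + 1) * log (1 - t ^ (k + 1)) := by
    simp_rw [← tsum_mul_left, hdouble.tsum_comm, fun k => (hfiber k).tsum_eq]
  rw [hswap]
  exact (hdouble.hasSum.prod_fiberwise hfiber).summable.hasSum

end PlethysticSeries

/-- Product formula for the plethystic exponential: for `a : ℕ → ℕ` and `t ∈ ℂ`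
with `|t| < 1` such that `∑_{n ≥ 1} a(n) |t|^n` converges, the family
`n ↦ (1 - t^n)^{-a(n)}` (for `n ≥ 1`) has product
`exp (∑_{p ≥ 1} (1/p) ∑_{k ≥ 1} a(k) t^(p k))`. -/
theorem plethystic_exponential_product (a : ℕ → ℕ) (t : ℂ)
    (ht : ‖t‖ < 1)
    (hsum : Summable fun n : ℕ => (a (n + 1) : ℝ) * ‖t‖ ^ (n + 1)) :
    HasProd (fun n : ℕ => (1 - t ^ (n + 1)) ^ (-(a (n + 1) : ℤ)))
      (Complex.exp (∑' p : ℕ, (1 / (p + 1 : ℂ)) *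
        ∑' k : ℕ, (a (k + 1) : ℂ) * t ^ ((p + 1) * (k + 1)))) := by
  have hlog := hasSum_neg_mul_log_one_sub_pow (fun n => (a n : ℂ)) ht (by simpa using hsum)
  convert hlog.cexp using 1
  funext n
  have hne : 1 - t ^ (n + 1) ≠ 0 :=
    sub_ne_zero.mpr fun h => by simpa [← h] using norm_pow_succ_lt_one ht n
  rw [Function.comp_apply, ← exp_intCast_mul_log _ hne, Int.cast_neg, Int.cast_natCast]
end

section
/- Let m, n ≥ 1, let L = lcm(m,n), let ω_m = exp(2πi/m) and ω_n = exp(2πi/n), and let t ∈ ℂ with |t| < 1. Then (1/(mn))·∑_{i=0}^{m−1}∑_{j=0}^{n−1} [(1 − t·ω_m^i)(1 − t·ω_n^j)(1 − t·ω_m^{−i}·ω_n^{−j})]^{−1} = [∑_{r=0}^{L−1} t^{3r − m⌊r/m⌋ − n⌊r/n⌋}] / [(1 − t^m)(1 − t^n)(1 − t^L)]. (Note 3r − m⌊r/m⌋ − n⌊r/n⌋ = r + (r mod m) + (r mod n).) This is the Molien (Hilbert) series of the orbifold ℂ³/(ℤ_m × ℤ_n), where the generator of ℤ_m acts on ℂ³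 with eigenvalues (ω_m, 1, ω_m^{−1}) and the generator of ℤ_n acts with eigenvalues (1, ω_n, ω_n^{−1}). -/
/-!
Expanding each factor `(1 - tλ)⁻¹` of `det(1 - t g)⁻¹` for `g = (ω_m^i, ω_n^j)` as a geometric
series gives `∑ t^(a+b+c) ω_m^(i(a-c)) ω_n^(j(b-c))` over `(a, b, c) ∈ ℕ³`. Averaging over `i, j`,
orthogonality of characters keeps exactly the exponents of invariant monomials, those with
`c ≡ a [MOD m]` and `c ≡ b [MOD n]`. These are precisely `(r % m + m p, r % n + n q, r + L s)` for
unique `r < L` and `p, q, s ∈ ℕ`: the invariant ring is free over `ℂ[x^m, y^n, z^L]` with basis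
`x^(r % m) y^(r % n) z^r`, which yields the right-hand side.
-/

open Finset

theorem IsPrimitiveRoot.sum_pow_zpow_eq_ite {K : Type*} [Field K] {ζ : K} {m : ℕ}
    (hζ : IsPrimitiveRoot ζ m) (k : ℤ) :
    ∑ i ∈ range m, (ζ ^ i) ^ k = if (m : ℤ) ∣ k then (m : K) else 0 := by
  have hcomm (i : ℕ) : (ζ ^ i) ^ k = (ζ ^ k) ^ i := by
    rw [← zpow_natCast, ← zpow_mul, mul_comm, zpow_mul, zpow_natCast]
  simp only [hcomm]
  split_ifs with hk
  · simp [(hζ.zpow_eq_one_iff_dvd k).mpr hk]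
  · have hne : ζ ^ k - 1 ≠ 0 := sub_ne_zero.mpr fun h => hk ((hζ.zpow_eq_one_iff_dvd k).mp h)
    have hpow : (ζ ^ k) ^ m = 1 := by
      rw [← zpow_natCast, ← zpow_mul, mul_comm, zpow_mul, zpow_natCast, hζ.pow_eq_one, one_zpow]
    have hgeom := geom_sum_mul (ζ ^ k) m
    rw [hpow, sub_self] at hgeom
    exact (mul_eq_zero.mp hgeom).resolve_right hne

section Geometric

variable {K : Type*} [NormedField K]

lemma summable_norm_geometric_prod_three {u v w : K} (hu : ‖u‖ < 1) (hv : ‖v‖ < 1)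
    (hw : ‖w‖ < 1) : Summable fun e : (ℕ × ℕ) × ℕ => ‖u ^ e.1.1 * v ^ e.1.2 * w ^ e.2‖ :=
  ((summable_norm_geometric_of_norm_lt_one hu).mul_norm
    (summable_norm_geometric_of_norm_lt_one hv)).mul_norm (summable_norm_geometric_of_norm_lt_one hw)

variable [CompleteSpace K]

lemma hasSum_geometric_prod_three {u v w : K} (hu : ‖u‖ < 1) (hv : ‖v‖ < 1) (hw : ‖w‖ < 1) :
    HasSum (fun e : (ℕ × ℕ) × ℕ => u ^ e.1.1 * v ^ e.1.2 * w ^ e.2)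
      ((1 - u) * (1 - v) * (1 - w))⁻¹ := by
  rw [mul_inv, mul_inv]
  exact ((hasSum_geometric_of_norm_lt_one hu).mul (hasSum_geometric_of_norm_lt_one hv)
    ((summable_norm_geometric_of_norm_lt_one hu).mul_norm
      (summable_norm_geometric_of_norm_lt_one hv)).of_norm).mul
    (hasSum_geometric_of_norm_lt_one hw) (summable_norm_geometric_prod_three hu hv hw).of_norm

lemma hasSum_inv_prod_one_sub_mul_of_norm_eq_one {t x y : K} (ht : ‖t‖ < 1) (hx : ‖x‖ = 1)
    (hy : ‖y‖ = 1) :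
    HasSum (fun e : (ℕ × ℕ) × ℕ =>
        t ^ (e.1.1 + e.1.2 + e.2) * (x ^ ((e.1.1 : ℤ) - e.2) * y ^ ((e.1.2 : ℤ) - e.2)))
      ((1 - t * x) * (1 - t * y) * (1 - t * x⁻¹ * y⁻¹))⁻¹ := by
  have hx0 : x ≠ 0 := norm_ne_zero_iff.mp (by simp [hx])
  have hy0 : y ≠ 0 := norm_ne_zero_iff.mp (by simp [hy])
  have hnorm {z : K} (hz : ‖z‖ = 1) : ‖t * z‖ < 1 := by simpa [hz] using ht
  convert hasSum_geometric_prod_three (hnorm hx) (hnorm hy)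
    (hnorm (z := x⁻¹ * y⁻¹) (by simp [hx, hy])) using 1
  · ext e
    rw [zpow_sub₀ hx0, zpow_sub₀ hy0]
    simp only [zpow_natCast, mul_pow, inv_pow, pow_add]
    field_simp
  · rw [mul_assoc t]

end Geometric

/-- `(a, b, c)` lies here iff `x^a y^b z^c` is invariant under the action of `ℤ_m × ℤ_n` with
eigenvalues `(ω_m, 1, ω_m⁻¹)` and `(1, ω_n, ω_n⁻¹)`. -/
def invariantExponents (m n : ℕ) : Set ((ℕ × ℕ) × ℕ) :=
  {e | e.2 ≡ e.1.1 [MOD m] ∧ e.2 ≡ e.1.2 [MOD n]}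

lemma Nat.add_mul_modEq_mod_add_mul_of_dvd {m L : ℕ} (hm : m ∣ L) (r s p : ℕ) :
    r + L * s ≡ r % m + m * p [MOD m] := by
  rw [Nat.ModEq, Nat.add_mul_mod_self_left, Nat.mod_mod, Nat.add_mod,
    Nat.mod_eq_zero_of_dvd (dvd_mul_of_dvd_left hm s), add_zero, Nat.mod_mod]

def invariantExponentsEquiv {m n L : ℕ} [NeZero L] (hm : m ∣ L) (hn : n ∣ L) :
    Fin L × (ℕ × ℕ) × ℕ ≃ invariantExponents m n where
  toFun x := ⟨((x.1 % m + m * x.2.1.1, x.1 % n + n * x.2.1.2), x.1 + L * x.2.2),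
    Nat.add_mul_modEq_mod_add_mul_of_dvd hm _ _ _, Nat.add_mul_modEq_mod_add_mul_of_dvd hn _ _ _⟩
  invFun e := (⟨e.1.2 % L, Nat.mod_lt _ (NeZero.pos L)⟩, ((e.1.1.1 / m, e.1.1.2 / n), e.1.2 / L))
  left_inv := by
    rintro ⟨r, ⟨p, q⟩, s⟩
    have hm0 := Nat.pos_of_dvd_of_pos hm (NeZero.pos L)
    have hn0 := Nat.pos_of_dvd_of_pos hn (NeZero.pos L)
    simp [Nat.add_mul_div_left, Nat.div_eq_of_lt, Nat.mod_lt, Nat.mod_eq_of_lt, hm0, hn0,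
      NeZero.pos L]
  right_inv := by
    rintro ⟨⟨⟨a, b⟩, c⟩, ha : c % m = a % m, hb : c % n = b % n⟩
    ext <;> simp only [Nat.mod_mod_of_dvd c hm, Nat.mod_mod_of_dvd c hn, ha, hb, Nat.mod_add_div]

section Molien

variable {K : Type*} [NormedField K] [CompleteSpace K]

theorem hasSum_indicator_invariantExponents_of_isPrimitiveRoot {m n : ℕ} [NeZero m] [NeZero n]
    {ζ ξ t : K} (hζ : IsPrimitiveRoot ζ m) (hξ : IsPrimitiveRoot ξ n) (ht : ‖t‖ < 1) :
    HasSum ((invariantExponents m n).indicator fun e => t ^ (e.1.1 + e.1.2 + e.2))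
      (1 / ((m : K) * n) * ∑ i ∈ range m, ∑ j ∈ range n,
        ((1 - t * ζ ^ i) * (1 - t * ξ ^ j) * (1 - t * (ζ ^ i)⁻¹ * (ξ ^ j)⁻¹))⁻¹) := by
  have hm : (m : K) ≠ 0 := hζ.neZero'.ne
  have hn : (n : K) ≠ 0 := hξ.neZero'.ne
  have hnorm {k : ℕ} {z : K} (hz : IsPrimitiveRoot z k) (hk : k ≠ 0) (i : ℕ) : ‖z ^ i‖ = 1 :=
    (hz.isOfFinOrder hk).pow.norm_eq_one
  refine ((hasSum_sum fun i _ => hasSum_sum fun j _ =>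
    hasSum_inv_prod_one_sub_mul_of_norm_eq_one ht (hnorm hζ (NeZero.ne m) i)
      (hnorm hξ (NeZero.ne n) j)).mul_left (1 / ((m : K) * n))).congr_fun fun ⟨⟨a, b⟩, c⟩ => ?_
  simp only [← mul_sum, ← sum_mul, hζ.sum_pow_zpow_eq_ite, hξ.sum_pow_zpow_eq_ite,
    Set.indicator_apply, invariantExponents, Set.mem_ofPred_eq, Nat.modEq_iff_dvd]
  by_cases ha : (m : ℤ) ∣ a - c <;> by_cases hb : (n : ℤ) ∣ b - c <;> simp [ha, hb]
  field_simp

theorem hasSum_indicator_invariantExponents {m n L : ℕ} [NeZero L] (hm : m ∣ L) (hn : n ∣ L)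
    {t : K} (ht : ‖t‖ < 1) :
    HasSum ((invariantExponents m n).indicator fun e => t ^ (e.1.1 + e.1.2 + e.2))
      ((∑ r ∈ range L, t ^ (r + r % m + r % n)) / ((1 - t ^ m) * (1 - t ^ n) * (1 - t ^ L))) := by
  have hpow {k : ℕ} (hk : k ∣ L) : ‖t ^ k‖ < 1 := by
    rw [norm_pow]
    exact pow_lt_one₀ (norm_nonneg t) ht (ne_zero_of_dvd_ne_zero (NeZero.ne L) hk)
  have hprod := (hasSum_fintype fun r : Fin L => t ^ ((r : ℕ) + r % m + r % n)).mul
    (hasSum_geometric_prod_three (hpow hm) (hpow hn) (hpow dvd_rfl))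
    (summable_mul_of_summable_norm (f := fun r : Fin L => t ^ ((r : ℕ) + r % m + r % n))
      (g := fun e : (ℕ × ℕ) × ℕ => (t ^ m) ^ e.1.1 * (t ^ n) ^ e.1.2 * (t ^ L) ^ e.2)
      Summable.of_finite (summable_norm_geometric_prod_three (hpow hm) (hpow hn) (hpow dvd_rfl)))
  rw [← hasSum_subtype_iff_indicator, ← (invariantExponentsEquiv hm hn).hasSum_iff,
    div_eq_mul_inv, ← Fin.sum_univ_eq_sum_range]
  refine hprod.congr_fun fun ⟨r, ⟨p, q⟩, s⟩ => ?_
  simp only [Function.comp_apply, invariantExponentsEquiv, Equiv.coe_fn_mk, ← pow_mul, ← pow_add]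
  congr 1
  ring

end Molien

/-- The Molien (Hilbert) series of the orbifold `ℂ³/(ℤ_m × ℤ_n)`, where the
generator of `ℤ_m` acts with eigenvalues `(ω_m, 1, ω_m⁻¹)` and the generator of
`ℤ_n` with eigenvalues `(1, ω_n, ω_n⁻¹)`: for `|t| < 1`,
`(1/(mn)) ∑_{i<m} ∑_{j<n} [(1 - t ω_m^i)(1 - t ω_n^j)(1 - t ω_m^{-i} ω_n^{-j})]⁻¹
  = (∑_{r<lcm(m,n)} t^{3r - m⌊r/m⌋ - n⌊r/n⌋}) / ((1-t^m)(1-t^n)(1-t^{lcm(m,n)}))`. -/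
theorem molien_Zm_Zn (m n : ℕ) (hm : 1 ≤ m) (hn : 1 ≤ n) (t : ℂ)
    (ht : ‖t‖ < 1) :
    (1 / ((m : ℂ) * (n : ℂ))) *
      ∑ i ∈ Finset.range m, ∑ j ∈ Finset.range n,
        ((1 - t * Complex.exp (2 * Real.pi * Complex.I / m) ^ i) *
         (1 - t * Complex.exp (2 * Real.pi * Complex.I / n) ^ j) *
         (1 - t * Complex.exp (2 * Real.pi * Complex.I / m) ^ (-(i : ℤ)) *
              Complex.exp (2 * Real.pi * Complex.I / n) ^ (-(j : ℤ))))⁻¹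
    = (∑ r ∈ Finset.range (Nat.lcm m n), t ^ (3 * r - m * (r / m) - n * (r / n))) /
        ((1 - t ^ m) * (1 - t ^ n) * (1 - t ^ Nat.lcm m n)) := by
  have hm0 : m ≠ 0 := by omega
  have hn0 : n ≠ 0 := by omega
  have : NeZero m := ⟨hm0⟩
  have : NeZero n := ⟨hn0⟩
  have : NeZero (Nat.lcm m n) := ⟨Nat.lcm_ne_zero hm0 hn0⟩
  have hexp (r : ℕ) : 3 * r - m * (r / m) - n * (r / n) = r + r % m + r % n := by
    have := Nat.div_add_mod r m
    have := Nat.div_add_mod r n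
    omega
  simp only [zpow_neg, zpow_natCast, hexp]
  exact (hasSum_indicator_invariantExponents_of_isPrimitiveRoot
    (Complex.isPrimitiveRoot_exp m hm0) (Complex.isPrimitiveRoot_exp n hn0) ht).unique
    (hasSum_indicator_invariantExponents (Nat.dvd_lcm_left m n) (Nat.dvd_lcm_right m n) ht)
end

section
/- Let m ≥ 1, let ω = exp(2πi/m), and let t₁, t₂, t₃ ∈ ℂ with |t₁|, |t₂|, |t₃| < 1. Then (1/m²)·∑_{i=0}^{m−1}∑_{j=0}^{m−1} [(1 − t₁·ω^i)(1 − t₂·ω^j)(1 − t₃·ω^{−i−j})]^{−1} = (1 − (t₁t₂t₃)^m) / [(1 − t₁t₂t₃)(1 − t₁^m)(1 − t₂^m)(1 − t₃^m)]. This is the refined (three-variable) Molien/Hilbert series of the orbifold ℂ³/(ℤ_m × ℤ_m). -/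
/-!
If `u ^ m = 1` then `(1 - t u)⁻¹ = (∑_{a<m} tᵃ uᵃ) / (1 - tᵐ)`, so each summand becomes a finite
triple sum over exponents `a, b, c < m` divided by `∏ (1 - tₖᵐ)`. Writing `ζ^(-i-j)` as
`(ζ^i)⁻¹ (ζ^j)⁻¹` and summing over `i` and `j` is a discrete Fourier inversion: orthogonality of
the characters `i ↦ ζ^(i(a-c))` keeps only the terms `a = b = c`, each with weight `m²`, leaving
`m² ∑_{c<m} (t₁t₂t₃)ᶜ`.
-/

open Finset

variable {K : Type*} [Field K]

theorem inv_one_sub_eq_geom_sum_div {x : K} {m : ℕ} (h : 1 - x ^ m ≠ 0) :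
    (1 - x)⁻¹ = (∑ a ∈ range m, x ^ a) / (1 - x ^ m) := by
  rw [← mul_neg_geom_sum x m] at h ⊢
  rw [eq_div_iff h, ← mul_assoc, inv_mul_cancel₀ (left_ne_zero_of_mul h), one_mul]

theorem inv_one_sub_mul_eq_geom_sum_div {t u : K} {m : ℕ} (hu : u ^ m = 1) (h : 1 - t ^ m ≠ 0) :
    (1 - t * u)⁻¹ = (∑ a ∈ range m, t ^ a * u ^ a) / (1 - t ^ m) := by
  have hx : (t * u) ^ m = t ^ m := by rw [mul_pow, hu, mul_one]
  simp_rw [inv_one_sub_eq_geom_sum_div (hx ▸ h), hx, mul_pow]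

namespace IsPrimitiveRoot

variable {ζ : K} {m : ℕ}

theorem geom_sum_pow_div_pow_eq_ite {a c : ℕ} (hζ : IsPrimitiveRoot ζ m) (ha : a < m) (hc : c < m) :
    ∑ i ∈ range m, (ζ ^ a / ζ ^ c) ^ i = if a = c then (m : K) else 0 := by
  have hζ0 : ζ ≠ 0 := hζ.ne_zero (by omega)
  split_ifs with hac
  · simp [hac, hζ0]
  have hne : ζ ^ a / ζ ^ c ≠ 1 := by
    rw [Ne, div_eq_one_iff_eq (pow_ne_zero c hζ0)]
    exact fun h => hac (hζ.pow_inj ha hc h)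
  rw [geom_sum_eq hne, div_pow, ← pow_mul, ← pow_mul, mul_comm a, mul_comm c, pow_mul,
    pow_mul, hζ.pow_eq_one, one_pow, one_pow, div_one, sub_self, zero_div]

theorem sum_geom_sum_mul_inv_pow (hζ : IsPrimitiveRoot ζ m) (t : K) {c : ℕ} (hc : c < m) :
    ∑ i ∈ range m, (∑ a ∈ range m, t ^ a * (ζ ^ i) ^ a) * ((ζ ^ i)⁻¹) ^ c = m * t ^ c := by
  have hζ0 : ζ ≠ 0 := hζ.ne_zero (by omega)
  calc ∑ i ∈ range m, (∑ a ∈ range m, t ^ a * (ζ ^ i) ^ a) * ((ζ ^ i)⁻¹) ^ c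
      = ∑ a ∈ range m, t ^ a * ∑ i ∈ range m, (ζ ^ a / ζ ^ c) ^ i := by
        simp_rw [sum_mul, mul_sum]
        rw [sum_comm]
        refine sum_congr rfl fun a _ => sum_congr rfl fun i _ => ?_
        field_simp
        ring
    _ = ∑ a ∈ range m, t ^ a * if a = c then (m : K) else 0 :=
        sum_congr rfl fun a ha => by rw [hζ.geom_sum_pow_div_pow_eq_ite (mem_range.mp ha) hc]
    _ = m * t ^ c := by simp [mem_range.mpr hc, mul_comm]

theorem sum_sum_inv_one_sub_mul_pow (hζ : IsPrimitiveRoot ζ m) {t₁ t₂ t₃ : K}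
    (h₁ : 1 - t₁ ^ m ≠ 0) (h₂ : 1 - t₂ ^ m ≠ 0) (h₃ : 1 - t₃ ^ m ≠ 0) :
    ∑ i ∈ range m, ∑ j ∈ range m,
        ((1 - t₁ * ζ ^ i) * (1 - t₂ * ζ ^ j) * (1 - t₃ * ζ ^ (-(i : ℤ) - j)))⁻¹ =
      m ^ 2 * (∑ c ∈ range m, (t₁ * t₂ * t₃) ^ c) /
        ((1 - t₁ ^ m) * (1 - t₂ ^ m) * (1 - t₃ ^ m)) := by
  have hζ0 : ζ ≠ 0 := hζ.ne_zero (by rintro rfl; simp at h₁)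
  have hpow (i : ℕ) : (ζ ^ i) ^ m = 1 := by rw [← pow_mul, pow_mul', hζ.pow_eq_one, one_pow]
  have hinv (i j : ℕ) : ζ ^ (-(i : ℤ) - j) = (ζ ^ i)⁻¹ * (ζ ^ j)⁻¹ := by
    rw [zpow_sub₀ hζ0, zpow_neg, zpow_natCast, zpow_natCast, div_eq_mul_inv]
  calc ∑ i ∈ range m, ∑ j ∈ range m,
        ((1 - t₁ * ζ ^ i) * (1 - t₂ * ζ ^ j) * (1 - t₃ * ζ ^ (-(i : ℤ) - j)))⁻¹
      = (∑ i ∈ range m, ∑ j ∈ range m, ∑ c ∈ range m, t₃ ^ c *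
          ((∑ a ∈ range m, t₁ ^ a * (ζ ^ i) ^ a) * ((ζ ^ i)⁻¹) ^ c *
            ((∑ b ∈ range m, t₂ ^ b * (ζ ^ j) ^ b) * ((ζ ^ j)⁻¹) ^ c))) /
          ((1 - t₁ ^ m) * (1 - t₂ ^ m) * (1 - t₃ ^ m)) := by
        simp_rw [sum_div]
        refine sum_congr rfl fun i _ => sum_congr rfl fun j _ => ?_
        have hij : ((ζ ^ i)⁻¹ * (ζ ^ j)⁻¹) ^ m = 1 := by
          rw [mul_pow, inv_pow, inv_pow, hpow, hpow, inv_one, one_mul]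
        rw [hinv, mul_inv, mul_inv, inv_one_sub_mul_eq_geom_sum_div (hpow i) h₁,
          inv_one_sub_mul_eq_geom_sum_div (hpow j) h₂, inv_one_sub_mul_eq_geom_sum_div hij h₃,
          div_mul_div_comm, div_mul_div_comm, ← sum_div, mul_sum]
        congr 1
        refine sum_congr rfl fun c _ => ?_
        ring
    _ = (∑ c ∈ range m, t₃ ^ c * ((m * t₁ ^ c) * (m * t₂ ^ c))) /
          ((1 - t₁ ^ m) * (1 - t₂ ^ m) * (1 - t₃ ^ m)) := by
        rw [sum_comm_cycle]
        congr 1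
        refine sum_congr rfl fun c hc => ?_
        simp_rw [← mul_sum, ← sum_mul]
        rw [hζ.sum_geom_sum_mul_inv_pow t₁ (mem_range.mp hc),
          hζ.sum_geom_sum_mul_inv_pow t₂ (mem_range.mp hc)]
    _ = m ^ 2 * (∑ c ∈ range m, (t₁ * t₂ * t₃) ^ c) /
          ((1 - t₁ ^ m) * (1 - t₂ ^ m) * (1 - t₃ ^ m)) := by
        rw [mul_sum]
        congr 1
        refine sum_congr rfl fun c _ => ?_
        ring

end IsPrimitiveRoot

/-- The refined (three-variable) Molien/Hilbert series of `ℂ³/(ℤ_m × ℤ_m)`: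
for `ω = exp(2πi/m)` and `|t₁|, |t₂|, |t₃| < 1`,
`(1/m²) ∑_{i<m} ∑_{j<m} [(1 - t₁ω^i)(1 - t₂ω^j)(1 - t₃ω^{-i-j})]⁻¹
  = (1 - (t₁t₂t₃)^m) / ((1 - t₁t₂t₃)(1 - t₁^m)(1 - t₂^m)(1 - t₃^m))`. -/
theorem refined_molien_Zm_Zm (m : ℕ) (hm : 1 ≤ m) (t₁ t₂ t₃ : ℂ)
    (h₁ : ‖t₁‖ < 1) (h₂ : ‖t₂‖ < 1) (h₃ : ‖t₃‖ < 1) :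
    (1 / ((m : ℂ) ^ 2)) *
      ∑ i ∈ Finset.range m, ∑ j ∈ Finset.range m,
        ((1 - t₁ * Complex.exp (2 * Real.pi * Complex.I / m) ^ i) *
         (1 - t₂ * Complex.exp (2 * Real.pi * Complex.I / m) ^ j) *
         (1 - t₃ * Complex.exp (2 * Real.pi * Complex.I / m) ^ (-(i : ℤ) - (j : ℤ))))⁻¹
    = (1 - (t₁ * t₂ * t₃) ^ m) /
        ((1 - t₁ * t₂ * t₃) * (1 - t₁ ^ m) * (1 - t₂ ^ m) * (1 - t₃ ^ m)) := by
  have hm0 : m ≠ 0 := Nat.one_le_iff_ne_zero.mp hm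
  have one_sub_pow_ne_zero {t : ℂ} (ht : ‖t‖ < 1) : 1 - t ^ m ≠ 0 := by
    refine (isUnit_one_sub_of_norm_lt_one ?_).ne_zero
    rw [norm_pow]
    exact pow_lt_one₀ (norm_nonneg t) ht hm0
  have one_sub_prod_ne_zero : 1 - t₁ * t₂ * t₃ ≠ 0 := by
    refine (isUnit_one_sub_of_norm_lt_one ?_).ne_zero
    rw [norm_mul, norm_mul]
    exact mul_lt_one_of_nonneg_of_lt_one_left (by positivity)
      (mul_lt_one_of_nonneg_of_lt_one_left (norm_nonneg _) h₁ h₂.le) h₃.le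
  have hm_cast : (m : ℂ) ≠ 0 := Nat.cast_ne_zero.mpr hm0
  rw [(Complex.isPrimitiveRoot_exp m hm0).sum_sum_inv_one_sub_mul_pow
    (one_sub_pow_ne_zero h₁) (one_sub_pow_ne_zero h₂) (one_sub_pow_ne_zero h₃),
    ← mul_neg_geom_sum (t₁ * t₂ * t₃) m]
  field_simp
end

section
/- Let n ≥ 1, let ω = exp(2πi/n), let T ∈ M₃(ℂ) be the cyclic permutation matrix with T₁₂ = T₂₃ = T₃₁ = 1 and all other entries 0, and for 0 ≤ i, j ≤ n−1 let D_{ij} = diag(ω^i, ω^j, ω^{−i−j}). Then for every t ∈ ℂ with |t| < 1, (1/(3n²))·∑_{i=0}^{n−1}∑_{j=0}^{n−1}∑_{s=0}^{2} det(I − t·T^s·D_{ij})^{−1} = (1 − t^n + t^{2n}) / [(1 − t³)(1 − t^n)²]. That is, the Molien (Hilbert) series of the orbifold ℂ³/Δ(3n²) equals (1 − t^n + t^{2n})/((1 − t³)(1 − t^n)²), where Δ(3n²) ⊂ SU(3) consists of the 3n² matrices T^s·D_{ij}. -/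
/-!
For `s = 1, 2` the matrix `T^s D` is monomial with entry product `a b c = 1`, so
`det (1 - t T^s D) = 1 - t³` and these `2n²` elements contribute `2n² / (1 - t³)`.
For the diagonal elements, each `(1 - t x)⁻¹` with `x^n = 1` equals the truncated geometric series
`(∑_{k<n} (t x)^k) / (1 - t^n)`; expanding the product and applying the orthogonality
`∑_{i<n} ω^{i(k-m)} = n δ_{km}` twice collapses the double sum over `(i, j)` to
`n² ∑_{m<n} t^{3m} / (1 - t^n)³ = n² (1 + t^n + t^{2n}) / ((1 - t³)(1 - t^n)²)`.
-/

open Finset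

section Determinants

variable {R : Type*} [CommRing R] (t a b c : R)

theorem det_one_sub_smul_diagonal_fin_three :
    (1 - t • Matrix.diagonal ![a, b, c]).det = (1 - t * a) * (1 - t * b) * (1 - t * c) := by
  simp [Matrix.det_fin_three]

theorem det_one_sub_smul_cycle_mul_diagonal :
    (1 - t • ((!![0, 1, 0; 0, 0, 1; 1, 0, 0] : Matrix (Fin 3) (Fin 3) R) *
      Matrix.diagonal ![a, b, c])).det = 1 - t ^ 3 * (a * b * c) := by
  simp [Matrix.det_fin_three, Matrix.vecMul_diagonal]
  ring

theorem det_one_sub_smul_cycle_sq_mul_diagonal :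
    (1 - t • ((!![0, 1, 0; 0, 0, 1; 1, 0, 0] : Matrix (Fin 3) (Fin 3) R) ^ 2 *
      Matrix.diagonal ![a, b, c])).det = 1 - t ^ 3 * (a * b * c) := by
  simp [sq, Matrix.det_fin_three, Matrix.vecMul_diagonal]
  ring

end Determinants

variable {K : Type*} [Field K]

theorem sum_inv_det_one_sub_smul_cycle_pow_mul_diagonal (t a b c : K) (habc : a * b * c = 1) :
    ∑ s ∈ range 3,
      ((1 - t • ((!![0, 1, 0; 0, 0, 1; 1, 0, 0] : Matrix (Fin 3) (Fin 3) K) ^ s *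
        Matrix.diagonal ![a, b, c])).det)⁻¹
      = ((1 - t * a) * (1 - t * b) * (1 - t * c))⁻¹ + 2 * (1 - t ^ 3)⁻¹ := by
  simp only [sum_range_succ, sum_range_zero, pow_zero, pow_one, one_mul,
    det_one_sub_smul_diagonal_fin_three, det_one_sub_smul_cycle_mul_diagonal,
    det_one_sub_smul_cycle_sq_mul_diagonal, habc, mul_one]
  ring

theorem inv_one_sub_mul_eq_geom_sum {n : ℕ} {t x : K} (hx : x ^ n = 1) (ht : t ^ n ≠ 1) :
    (1 - t * x)⁻¹ = (∑ k ∈ range n, t ^ k * x ^ k) / (1 - t ^ n) := by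
  have key : (1 - t * x) * ∑ k ∈ range n, t ^ k * x ^ k = 1 - t ^ n := by
    simp_rw [← mul_pow]
    rw [mul_neg_geom_sum, mul_pow, hx, mul_one]
  have hne : 1 - t ^ n ≠ 0 := sub_ne_zero.2 ht.symm
  rw [eq_div_iff hne, ← key, inv_mul_cancel_left₀ (left_ne_zero_of_mul (key ▸ hne))]

theorem pow_ne_one_of_norm_lt_one {𝕜 : Type*} [NormedDivisionRing 𝕜] {t : 𝕜} (ht : ‖t‖ < 1)
    {k : ℕ} (hk : k ≠ 0) : t ^ k ≠ 1 := fun h =>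
  (pow_lt_one₀ (norm_nonneg t) ht hk).ne (by rw [← norm_pow, h, norm_one])

namespace IsPrimitiveRoot

variable {n : ℕ} {ζ : K}

theorem sum_pow_div_pow (hζ : IsPrimitiveRoot ζ n) {k m : ℕ} (hk : k < n) (hm : m < n) :
    ∑ i ∈ range n, (ζ ^ i) ^ k / (ζ ^ i) ^ m = if k = m then (n : K) else 0 := by
  have hζm : ζ ^ m ≠ 0 := pow_ne_zero _ (hζ.ne_zero (by omega))
  simp_rw [← pow_mul, mul_comm _ k, mul_comm _ m, pow_mul, ← div_pow]
  split_ifs with hkm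
  · simp [hkm, div_self hζm]
  · have hw : ζ ^ k / ζ ^ m ≠ 1 := fun h =>
      hkm (hζ.pow_inj hk hm ((div_eq_one_iff_eq hζm).1 h))
    rw [geom_sum_eq hw, div_pow, ← pow_mul, ← pow_mul, mul_comm k, mul_comm m, pow_mul,
      pow_mul, hζ.pow_eq_one]
    simp

theorem sum_sum_pow_div_pow (hζ : IsPrimitiveRoot ζ n) (c : ℕ → K) {m : ℕ} (hm : m < n) :
    ∑ i ∈ range n, (∑ k ∈ range n, c k * (ζ ^ i) ^ k) / (ζ ^ i) ^ m = n * c m := by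
  simp_rw [sum_div, mul_div_assoc]
  rw [sum_comm]
  simp_rw [← mul_sum]
  rw [sum_congr rfl fun k hk => by rw [hζ.sum_pow_div_pow (mem_range.1 hk) hm]]
  simp [hm, mul_comm]

theorem sum_sum_inv_prod_one_sub_mul (hζ : IsPrimitiveRoot ζ n) {t : K} (ht : t ^ n ≠ 1) :
    ∑ i ∈ range n, ∑ j ∈ range n,
      ((1 - t * ζ ^ i) * (1 - t * ζ ^ j) * (1 - t * (ζ ^ i * ζ ^ j)⁻¹))⁻¹
      = n ^ 2 * (∑ m ∈ range n, (t ^ 3) ^ m) / (1 - t ^ n) ^ 3 := by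
  set F : K → K := fun x => ∑ k ∈ range n, t ^ k * x ^ k
  have hroot : ∀ i, (ζ ^ i) ^ n = 1 := fun i => by
    rw [← pow_mul, mul_comm, pow_mul, hζ.pow_eq_one, one_pow]
  have hexpand : ∀ i j : ℕ,
      ((1 - t * ζ ^ i) * (1 - t * ζ ^ j) * (1 - t * (ζ ^ i * ζ ^ j)⁻¹))⁻¹
        = (∑ m ∈ range n, t ^ m * (F (ζ ^ i) / (ζ ^ i) ^ m) * (F (ζ ^ j) / (ζ ^ j) ^ m))
          / (1 - t ^ n) ^ 3 := by
    intro i j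
    have hinv : ((ζ ^ i * ζ ^ j)⁻¹) ^ n = 1 := by
      rw [inv_pow, mul_pow, hroot, hroot, mul_one, inv_one]
    rw [mul_inv, mul_inv, inv_one_sub_mul_eq_geom_sum (hroot i) ht,
      inv_one_sub_mul_eq_geom_sum (hroot j) ht, inv_one_sub_mul_eq_geom_sum hinv ht,
      div_mul_div_comm, div_mul_div_comm, mul_sum, ← pow_three']
    exact congrArg (· / _) (sum_congr rfl fun m _ => by ring)
  calc _ = (∑ i ∈ range n, ∑ j ∈ range n, ∑ m ∈ range n,
          t ^ m * (F (ζ ^ i) / (ζ ^ i) ^ m) * (F (ζ ^ j) / (ζ ^ j) ^ m)) / (1 - t ^ n) ^ 3 := by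
        simp only [hexpand, sum_div]
    _ = (∑ m ∈ range n, t ^ m * (∑ i ∈ range n, F (ζ ^ i) / (ζ ^ i) ^ m)
          * (∑ j ∈ range n, F (ζ ^ j) / (ζ ^ j) ^ m)) / (1 - t ^ n) ^ 3 := by
        simp only [mul_sum, sum_mul]
        rw [sum_comm_cycle]
        exact congrArg (· / _) (sum_congr rfl fun _ _ => sum_comm)
    _ = (∑ m ∈ range n, t ^ m * (n * t ^ m) * (n * t ^ m)) / (1 - t ^ n) ^ 3 := by
        refine congrArg (· / _) (sum_congr rfl fun m hm => ?_)
        rw [hζ.sum_sum_pow_div_pow (t ^ ·) (mem_range.1 hm)]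
    _ = _ := by
        rw [mul_sum]
        exact congrArg (· / _) (sum_congr rfl fun m _ => by ring)

end IsPrimitiveRoot

/-- The Molien (Hilbert) series of the orbifold `ℂ³/Δ(3n²)`: with
`ω = exp(2πi/n)`, `T` the cyclic permutation matrix (`T₁₂ = T₂₃ = T₃₁ = 1`) and
`D_{ij} = diag(ω^i, ω^j, ω^{-i-j})`, for `|t| < 1`,
`(1/(3n²)) ∑_{i,j<n} ∑_{s<3} det(I - t·T^s·D_{ij})⁻¹
  = (1 - t^n + t^{2n}) / ((1 - t³)(1 - t^n)²)`. -/
theorem molien_Delta_3n2 (n : ℕ) (hn : 1 ≤ n) (t : ℂ) (ht : ‖t‖ < 1) :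
    (1 / (3 * (n : ℂ) ^ 2)) *
      ∑ i ∈ Finset.range n, ∑ j ∈ Finset.range n, ∑ s ∈ Finset.range 3,
        (Matrix.det
          ((1 : Matrix (Fin 3) (Fin 3) ℂ) -
            t • ((!![0, 1, 0; 0, 0, 1; 1, 0, 0] : Matrix (Fin 3) (Fin 3) ℂ) ^ s *
              Matrix.diagonal
                ![Complex.exp (2 * Real.pi * Complex.I / n) ^ i,
                  Complex.exp (2 * Real.pi * Complex.I / n) ^ j,
                  Complex.exp (2 * Real.pi * Complex.I / n) ^ (-(i : ℤ) - (j : ℤ))])))⁻¹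
    = (1 - t ^ n + t ^ (2 * n)) / ((1 - t ^ 3) * (1 - t ^ n) ^ 2) := by
  have hn0 : n ≠ 0 := Nat.one_le_iff_ne_zero.1 hn
  have hω := Complex.isPrimitiveRoot_exp n hn0
  set ω := Complex.exp (2 * Real.pi * Complex.I / n)
  have hω0 : ω ≠ 0 := hω.ne_zero hn0
  have htn : t ^ n ≠ 1 := pow_ne_one_of_norm_lt_one ht hn0
  have ht3 : t ^ 3 ≠ 1 := pow_ne_one_of_norm_lt_one ht three_ne_zero
  have hlast : ∀ i j : ℕ, ω ^ (-(i : ℤ) - (j : ℤ)) = (ω ^ i * ω ^ j)⁻¹ := fun i j => by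
    rw [zpow_sub₀ hω0, zpow_neg, zpow_natCast, zpow_natCast, mul_inv, div_eq_mul_inv]
  have hprod_one : ∀ i j : ℕ, ω ^ i * ω ^ j * (ω ^ i * ω ^ j)⁻¹ = 1 := fun i j =>
    mul_inv_cancel₀ (mul_ne_zero (pow_ne_zero i hω0) (pow_ne_zero j hω0))
  simp only [hlast, sum_inv_det_one_sub_smul_cycle_pow_mul_diagonal _ _ _ _ (hprod_one _ _),
    sum_add_distrib, sum_const, card_range, nsmul_eq_mul]
  rw [hω.sum_sum_inv_prod_one_sub_mul htn, geom_sum_eq ht3, ← pow_mul, mul_comm 3 n, pow_mul]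
  have hnC : (n : ℂ) ≠ 0 := Nat.cast_ne_zero.2 hn0
  field_simp [sub_ne_zero.2 htn.symm, sub_ne_zero.2 ht3]
  ring
end

section
/- Let m ≥ 1 and let t₁, t₂, t₃ ∈ ℂ with |t₁|, |t₂|, |t₃| < 1. Then exp( ∑_{p≥1} (1/p)·( t₁^{mp} + t₂^{mp} + t₃^{mp} + (t₁t₂t₃)^p − (t₁t₂t₃)^{mp} ) ) = (1 − (t₁t₂t₃)^m) / [(1 − t₁t₂t₃)(1 − t₁^m)(1 − t₂^m)(1 − t₃^m)], the series on the left converging absolutely. In plethystic language: the plethystic logarithm of the refined Hilbert series of ℂ³/(ℤ_m × ℤ_m) is the polynomial t₁^m + t₂^m + t₃^m + t₁t₂t₃ − (t₁t₂t₃)^m, so this orbifold is a complete intersection. -/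
/-!
Each of the five series is a shifted Taylor series `∑ z^(p+1)/(p+1) = -log (1 - z)` with
`z ∈ {t₁^m, t₂^m, t₃^m, t₁t₂t₃, (t₁t₂t₃)^m}`, all of modulus `< 1`. Exponentiating turns the
signed sum of logarithms into the product of the geometric factors `(1 - z)^{∓1}`.
-/

open Complex

section NormLtOne

variable {R : Type*} [NormedDivisionRing R] {a b : R}

lemma norm_mul_lt_one (ha : ‖a‖ < 1) (hb : ‖b‖ < 1) : ‖a * b‖ < 1 := by
  rw [norm_mul]
  exact mul_lt_one_of_nonneg_of_lt_one_left (norm_nonneg a) ha hb.le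

lemma norm_pow_lt_one (ha : ‖a‖ < 1) {m : ℕ} (hm : m ≠ 0) : ‖a ^ m‖ < 1 := by
  rw [norm_pow]
  exact pow_lt_one₀ (norm_nonneg a) ha hm

lemma one_sub_ne_zero_of_norm_lt_one (ha : ‖a‖ < 1) : 1 - a ≠ 0 :=
  sub_ne_zero.mpr fun h => by simp [← h] at ha

end NormLtOne

namespace Complex

lemma hasSum_one_div_succ_mul_pow_succ {z : ℂ} (hz : ‖z‖ < 1) :
    HasSum (fun p : ℕ => 1 / (p + 1 : ℂ) * z ^ (p + 1)) (-log (1 - z)) := by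
  simpa only [one_div_mul_eq_div] using hasSum_taylorSeries_neg_log' hz

lemma exp_neg_log_one_sub {z : ℂ} (hz : ‖z‖ < 1) : exp (-log (1 - z)) = (1 - z)⁻¹ := by
  rw [exp_neg, exp_log (one_sub_ne_zero_of_norm_lt_one hz)]

end Complex

/-- The plethystic logarithm of the refined Hilbert series of `ℂ³/(ℤ_m × ℤ_m)` is
the polynomial `t₁^m + t₂^m + t₃^m + t₁t₂t₃ - (t₁t₂t₃)^m`: for `|tᵢ| < 1`, the
series `∑_{p≥1} (1/p)(t₁^{mp} + t₂^{mp} + t₃^{mp} + (t₁t₂t₃)^p - (t₁t₂t₃)^{mp})`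
converges absolutely and its exponential equals
`(1 - (t₁t₂t₃)^m)/((1 - t₁t₂t₃)(1 - t₁^m)(1 - t₂^m)(1 - t₃^m))`. -/
theorem plethystic_exp_Zm_Zm (m : ℕ) (hm : 1 ≤ m) (t₁ t₂ t₃ : ℂ)
    (h₁ : ‖t₁‖ < 1) (h₂ : ‖t₂‖ < 1) (h₃ : ‖t₃‖ < 1) :
    Summable (fun p : ℕ => (1 / (p + 1 : ℂ)) *
      (t₁ ^ (m * (p + 1)) + t₂ ^ (m * (p + 1)) + t₃ ^ (m * (p + 1)) +
        (t₁ * t₂ * t₃) ^ (p + 1) - (t₁ * t₂ * t₃) ^ (m * (p + 1)))) ∧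
    Complex.exp (∑' p : ℕ, (1 / (p + 1 : ℂ)) *
      (t₁ ^ (m * (p + 1)) + t₂ ^ (m * (p + 1)) + t₃ ^ (m * (p + 1)) +
        (t₁ * t₂ * t₃) ^ (p + 1) - (t₁ * t₂ * t₃) ^ (m * (p + 1))))
    = (1 - (t₁ * t₂ * t₃) ^ m) /
        ((1 - t₁ * t₂ * t₃) * (1 - t₁ ^ m) * (1 - t₂ ^ m) * (1 - t₃ ^ m)) := by
  set u := t₁ * t₂ * t₃
  have hm₀ : m ≠ 0 := Nat.one_le_iff_ne_zero.mp hm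
  have hu : ‖u‖ < 1 := norm_mul_lt_one (norm_mul_lt_one h₁ h₂) h₃
  have h₁m := norm_pow_lt_one h₁ hm₀
  have h₂m := norm_pow_lt_one h₂ hm₀
  have h₃m := norm_pow_lt_one h₃ hm₀
  have hum := norm_pow_lt_one hu hm₀
  have hsum : HasSum (fun p : ℕ => (1 / (p + 1 : ℂ)) *
      (t₁ ^ (m * (p + 1)) + t₂ ^ (m * (p + 1)) + t₃ ^ (m * (p + 1)) +
        u ^ (p + 1) - u ^ (m * (p + 1))))
      (-log (1 - t₁ ^ m) + -log (1 - t₂ ^ m) + -log (1 - t₃ ^ m) + -log (1 - u) -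
        -log (1 - u ^ m)) := by
    refine ((((hasSum_one_div_succ_mul_pow_succ h₁m).add
      (hasSum_one_div_succ_mul_pow_succ h₂m)).add (hasSum_one_div_succ_mul_pow_succ h₃m)).add
      (hasSum_one_div_succ_mul_pow_succ hu)).sub (hasSum_one_div_succ_mul_pow_succ hum)
      |>.congr_fun fun p => ?_
    simp only [pow_mul]
    ring
  refine ⟨hsum.summable, ?_⟩
  rw [hsum.tsum_eq, exp_sub, exp_add, exp_add, exp_add, exp_neg_log_one_sub h₁m,
    exp_neg_log_one_sub h₂m, exp_neg_log_one_sub h₃m, exp_neg_log_one_sub hu,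
    exp_neg_log_one_sub hum, div_inv_eq_mul, div_eq_mul_inv]
  simp only [mul_inv]
  ring
end

section
/- Let n ≥ 1 and let t₁, t₂, t₃ ∈ ℂ with |t₁|, |t₂|, |t₃| < 1. Then the sum of t₁^{n₁}·t₂^{n₂}·t₃^{n₃} over all triples (n₁, n₂, n₃) ∈ ℕ³ satisfying n₁ ≡ n₂ ≡ n₃ (mod n) converges and equals (1 − (t₁t₂t₃)^n) / [(1 − t₁^n)(1 − t₂^n)(1 − t₃^n)(1 − t₁t₂t₃)]. (This is the generating function counting the mesonic gauge invariant operators Tr(φ₁^{n₁}φ₂^{n₂}φ₃^{n₃}) of the ℂ³/(ℤ_n × ℤ_n) orbifold theory with discrete torsion, where the trace Tr(Q^{s₁}P^{s₂}(QP)^{−s₃}) is nonzero exactly when n₁ ≡ n₂ ≡ n₃ mod n.) -/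
/-!
Writing each exponent as `nᵢ = r + n kᵢ` with the common residue `r < n` identifies the index
set with `Fin n × ℕ³`, and the summand factors as `(t₁t₂t₃)^r · (t₁ⁿ)^k₁ (t₂ⁿ)^k₂ (t₃ⁿ)^k₃`.
The sum is therefore a finite geometric sum in `t₁t₂t₃` times three geometric series in the `tᵢⁿ`.
-/

theorem HasSum.mul_of_summable_norm {ι κ R : Type*} [NormedRing R] {f : ι → R} {g : κ → R}
    {a b : R} (hf : HasSum f a) (hg : HasSum g b) (hf' : Summable fun i => ‖f i‖)
    (hg' : Summable fun k => ‖g k‖) : HasSum (fun x : ι × κ => f x.1 * g x.2) (a * b) :=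
  hf.mul hg (summable_mul_of_summable_norm' hf' hf.summable hg' hg.summable)

theorem summable_norm_geometric_mul_geometric_mul_geometric {R : Type*} [NormedRing R]
    {a b c : R} (ha : ‖a‖ < 1) (hb : ‖b‖ < 1) (hc : ‖c‖ < 1) :
    Summable fun k : ℕ × ℕ × ℕ => ‖a ^ k.1 * (b ^ k.2.1 * c ^ k.2.2)‖ :=
  (summable_norm_geometric_of_norm_lt_one ha).mul_norm (g := fun k : ℕ × ℕ => b ^ k.1 * c ^ k.2)
    ((summable_norm_geometric_of_norm_lt_one hb).mul_norm
      (summable_norm_geometric_of_norm_lt_one hc))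

theorem hasSum_geometric_mul_geometric_mul_geometric {K : Type*} [NormedDivisionRing K]
    {a b c : K} (ha : ‖a‖ < 1) (hb : ‖b‖ < 1) (hc : ‖c‖ < 1) :
    HasSum (fun k : ℕ × ℕ × ℕ => a ^ k.1 * (b ^ k.2.1 * c ^ k.2.2))
      ((1 - a)⁻¹ * ((1 - b)⁻¹ * (1 - c)⁻¹)) :=
  (hasSum_geometric_of_norm_lt_one ha).mul_of_summable_norm
    (g := fun k : ℕ × ℕ => b ^ k.1 * c ^ k.2)
    ((hasSum_geometric_of_norm_lt_one hb).mul_of_summable_norm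
      (hasSum_geometric_of_norm_lt_one hc) (summable_norm_geometric_of_norm_lt_one hb)
      (summable_norm_geometric_of_norm_lt_one hc))
    (summable_norm_geometric_of_norm_lt_one ha)
    ((summable_norm_geometric_of_norm_lt_one hb).mul_norm
      (summable_norm_geometric_of_norm_lt_one hc))

@[simps apply_coe]
def sameResidueTripleEquiv (n : ℕ) [NeZero n] :
    Fin n × ℕ × ℕ × ℕ ≃ {v : ℕ × ℕ × ℕ // v.1 % n = v.2.1 % n ∧ v.2.1 % n = v.2.2 % n} where
  toFun p := ⟨(p.1 + n * p.2.1, p.1 + n * p.2.2.1, p.1 + n * p.2.2.2), by simp⟩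
  invFun v := (Fin.ofNat n v.1.1, v.1.1 / n, v.1.2.1 / n, v.1.2.2 / n)
  left_inv := by
    rintro ⟨r, k₁, k₂, k₃⟩
    have hr : (r : ℕ) / n = 0 := Nat.div_eq_of_lt r.isLt
    ext <;> simp [Nat.add_mul_div_left _ _ (NeZero.pos n), hr, Nat.mod_eq_of_lt r.isLt]
  right_inv := by
    rintro ⟨⟨a, b, c⟩, hab, hbc⟩
    ext <;> simp only [Fin.val_ofNat]
    · exact Nat.mod_add_div a n
    · rw [hab]; exact Nat.mod_add_div b n
    · rw [hab, hbc]; exact Nat.mod_add_div c n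

theorem geom_sum_fin_div_eq {K : Type*} [Field K] {c : K} (hc : c ≠ 1) (n : ℕ) (x y z : K) :
    (1 - c ^ n) / (x * y * z * (1 - c)) = (∑ r : Fin n, c ^ (r : ℕ)) * (x⁻¹ * (y⁻¹ * z⁻¹)) := by
  rw [Fin.sum_univ_eq_sum_range, geom_sum_eq hc, ← neg_sub 1 c,
    ← neg_sub 1 (c ^ n), neg_div_neg_eq]
  simp only [div_eq_mul_inv, mul_inv]
  ring

/-- The generating function of mesonic gauge invariants of the
`ℂ³/(ℤ_n × ℤ_n)` orbifold theory with discrete torsion: for `|tᵢ| < 1`, the sum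
of `t₁^{n₁} t₂^{n₂} t₃^{n₃}` over all triples `(n₁, n₂, n₃) ∈ ℕ³` with
`n₁ ≡ n₂ ≡ n₃ (mod n)` converges and equals
`(1 - (t₁t₂t₃)^n)/((1 - t₁^n)(1 - t₂^n)(1 - t₃^n)(1 - t₁t₂t₃))`. -/
theorem discrete_torsion_generating_function (n : ℕ) (hn : 1 ≤ n) (t₁ t₂ t₃ : ℂ)
    (h₁ : ‖t₁‖ < 1) (h₂ : ‖t₂‖ < 1) (h₃ : ‖t₃‖ < 1) :
    HasSum
      (fun v : {v : ℕ × ℕ × ℕ // v.1 % n = v.2.1 % n ∧ v.2.1 % n = v.2.2 % n} =>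
        t₁ ^ (v : ℕ × ℕ × ℕ).1 * t₂ ^ (v : ℕ × ℕ × ℕ).2.1 * t₃ ^ (v : ℕ × ℕ × ℕ).2.2)
      ((1 - (t₁ * t₂ * t₃) ^ n) /
        ((1 - t₁ ^ n) * (1 - t₂ ^ n) * (1 - t₃ ^ n) * (1 - t₁ * t₂ * t₃))) := by
  have : NeZero n := ⟨by omega⟩
  have hpow {t : ℂ} (ht : ‖t‖ < 1) : ‖t ^ n‖ < 1 := by
    rw [norm_pow]; exact pow_lt_one₀ (norm_nonneg t) ht (NeZero.ne n)
  have hprod : ‖t₁ * t₂ * t₃‖ < 1 := by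
    rw [norm_mul, norm_mul]
    exact mul_lt_one_of_nonneg_of_lt_one_left (by positivity)
      (mul_lt_one_of_nonneg_of_lt_one_left (norm_nonneg _) h₁ h₂.le) h₃.le
  have hprod_ne : t₁ * t₂ * t₃ ≠ 1 := fun h => by simp [h] at hprod
  have hsum := (hasSum_fintype fun r : Fin n => (t₁ * t₂ * t₃) ^ (r : ℕ)).mul_of_summable_norm
    (hasSum_geometric_mul_geometric_mul_geometric (hpow h₁) (hpow h₂) (hpow h₃)) .of_finite
    (summable_norm_geometric_mul_geometric_mul_geometric (hpow h₁) (hpow h₂) (hpow h₃))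
  rw [geom_sum_fin_div_eq hprod_ne, ← (sameResidueTripleEquiv n).hasSum_iff]
  convert hsum using 1
  · rfl
  · funext p
    simp only [Function.comp_apply, sameResidueTripleEquiv_apply_coe, pow_add, pow_mul]
    ring
end

section
/- Suppose a : ℕ → ℝ satisfies a(0) = a(6) = a(8) = 1, a(k) = 0 for all k < 10 with k ∉ {0, 6, 8}, and a(k) = a(k−4) + a(k−6) − a(k−10) for all k ≥ 10. Then for every k ∈ ℕ, a(k) = (1/72)·[ 3(1 + (−1)^k)(1 + k) + 18·cos(kπ/2) + 24·(cos(kπ/3) + cos(2kπ/3)) + 8√3·(sin(kπ/3) − sin(2kπ/3)) ]. (These a(k) are the Taylor coefficients of the Ê₆ Molien series (1 − t⁴ + t⁸)/(1 − t⁴ − t⁶ + t¹⁰), i.e., the number of single-trace gauge invariants of degree k for the Ê₆ orbifold ℂ²/Ê₆; in particular a(12m) = 1 + m.) -/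
open Real

lemma C3_0 : Real.cos (0 * π / 3) = 1 := by
  norm_num

lemma S3_0 : Real.sin (0 * π / 3) = 0 := by
  norm_num

lemma C3_1 : Real.cos (1 * π / 3) = 1/2 := by
  rw [show (1:ℝ) * π / 3 = 0 * π / 3 + π/3 by ring, Real.cos_add, C3_0, S3_0,
    Real.cos_pi_div_three, Real.sin_pi_div_three]
  have h3 : Real.sqrt 3 ^ 2 = 3 := Real.sq_sqrt (by norm_num)
  ring_nf
  try rw [h3]
  try norm_num
  try ring

lemma S3_1 : Real.sin (1 * π / 3) = Real.sqrt 3/2 := by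
  rw [show (1:ℝ) * π / 3 = 0 * π / 3 + π/3 by ring, Real.sin_add, C3_0, S3_0,
    Real.cos_pi_div_three, Real.sin_pi_div_three]
  have h3 : Real.sqrt 3 ^ 2 = 3 := Real.sq_sqrt (by norm_num)
  ring_nf
  try rw [h3]
  try norm_num
  try ring

lemma C3_2 : Real.cos (2 * π / 3) = -(1/2) := by
  rw [show (2:ℝ) * π / 3 = 1 * π / 3 + π/3 by ring, Real.cos_add, C3_1, S3_1,
    Real.cos_pi_div_three, Real.sin_pi_div_three]
  have h3 : Real.sqrt 3 ^ 2 = 3 := Real.sq_sqrt (by norm_num)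
  ring_nf
  try rw [h3]
  try norm_num
  try ring

lemma S3_2 : Real.sin (2 * π / 3) = Real.sqrt 3/2 := by
  rw [show (2:ℝ) * π / 3 = 1 * π / 3 + π/3 by ring, Real.sin_add, C3_1, S3_1,
    Real.cos_pi_div_three, Real.sin_pi_div_three]
  have h3 : Real.sqrt 3 ^ 2 = 3 := Real.sq_sqrt (by norm_num)
  ring_nf
  try rw [h3]
  try norm_num
  try ring

lemma C3_3 : Real.cos (3 * π / 3) = -1 := by
  rw [show (3:ℝ) * π / 3 = 2 * π / 3 + π/3 by ring, Real.cos_add, C3_2, S3_2,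
    Real.cos_pi_div_three, Real.sin_pi_div_three]
  have h3 : Real.sqrt 3 ^ 2 = 3 := Real.sq_sqrt (by norm_num)
  ring_nf
  try rw [h3]
  try norm_num
  try ring

lemma S3_3 : Real.sin (3 * π / 3) = 0 := by
  rw [show (3:ℝ) * π / 3 = 2 * π / 3 + π/3 by ring, Real.sin_add, C3_2, S3_2,
    Real.cos_pi_div_three, Real.sin_pi_div_three]
  have h3 : Real.sqrt 3 ^ 2 = 3 := Real.sq_sqrt (by norm_num)
  ring_nf
  try rw [h3]
  try norm_num
  try ring

lemma C3_4 : Real.cos (4 * π / 3) = -(1/2) := by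
  rw [show (4:ℝ) * π / 3 = 3 * π / 3 + π/3 by ring, Real.cos_add, C3_3, S3_3,
    Real.cos_pi_div_three, Real.sin_pi_div_three]
  have h3 : Real.sqrt 3 ^ 2 = 3 := Real.sq_sqrt (by norm_num)
  ring_nf
  try rw [h3]
  try norm_num
  try ring

lemma S3_4 : Real.sin (4 * π / 3) = -(Real.sqrt 3/2) := by
  rw [show (4:ℝ) * π / 3 = 3 * π / 3 + π/3 by ring, Real.sin_add, C3_3, S3_3,
    Real.cos_pi_div_three, Real.sin_pi_div_three]
  have h3 : Real.sqrt 3 ^ 2 = 3 := Real.sq_sqrt (by norm_num)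
  ring_nf
  try rw [h3]
  try norm_num
  try ring

lemma C3_5 : Real.cos (5 * π / 3) = 1/2 := by
  rw [show (5:ℝ) * π / 3 = 4 * π / 3 + π/3 by ring, Real.cos_add, C3_4, S3_4,
    Real.cos_pi_div_three, Real.sin_pi_div_three]
  have h3 : Real.sqrt 3 ^ 2 = 3 := Real.sq_sqrt (by norm_num)
  ring_nf
  try rw [h3]
  try norm_num
  try ring

lemma S3_5 : Real.sin (5 * π / 3) = -(Real.sqrt 3/2) := by
  rw [show (5:ℝ) * π / 3 = 4 * π / 3 + π/3 by ring, Real.sin_add, C3_4, S3_4,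
    Real.cos_pi_div_three, Real.sin_pi_div_three]
  have h3 : Real.sqrt 3 ^ 2 = 3 := Real.sq_sqrt (by norm_num)
  ring_nf
  try rw [h3]
  try norm_num
  try ring

lemma C3_6 : Real.cos (6 * π / 3) = 1 := by
  rw [show (6:ℝ) * π / 3 = 5 * π / 3 + π/3 by ring, Real.cos_add, C3_5, S3_5,
    Real.cos_pi_div_three, Real.sin_pi_div_three]
  have h3 : Real.sqrt 3 ^ 2 = 3 := Real.sq_sqrt (by norm_num)
  ring_nf
  try rw [h3]
  try norm_num
  try ring

lemma S3_6 : Real.sin (6 * π / 3) = 0 := by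
  rw [show (6:ℝ) * π / 3 = 5 * π / 3 + π/3 by ring, Real.sin_add, C3_5, S3_5,
    Real.cos_pi_div_three, Real.sin_pi_div_three]
  have h3 : Real.sqrt 3 ^ 2 = 3 := Real.sq_sqrt (by norm_num)
  ring_nf
  try rw [h3]
  try norm_num
  try ring

lemma C3_7 : Real.cos (7 * π / 3) = 1/2 := by
  rw [show (7:ℝ) * π / 3 = 6 * π / 3 + π/3 by ring, Real.cos_add, C3_6, S3_6,
    Real.cos_pi_div_three, Real.sin_pi_div_three]
  have h3 : Real.sqrt 3 ^ 2 = 3 := Real.sq_sqrt (by norm_num)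
  ring_nf
  try rw [h3]
  try norm_num
  try ring

lemma S3_7 : Real.sin (7 * π / 3) = Real.sqrt 3/2 := by
  rw [show (7:ℝ) * π / 3 = 6 * π / 3 + π/3 by ring, Real.sin_add, C3_6, S3_6,
    Real.cos_pi_div_three, Real.sin_pi_div_three]
  have h3 : Real.sqrt 3 ^ 2 = 3 := Real.sq_sqrt (by norm_num)
  ring_nf
  try rw [h3]
  try norm_num
  try ring

lemma C3_8 : Real.cos (8 * π / 3) = -(1/2) := by
  rw [show (8:ℝ) * π / 3 = 7 * π / 3 + π/3 by ring, Real.cos_add, C3_7, S3_7,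
    Real.cos_pi_div_three, Real.sin_pi_div_three]
  have h3 : Real.sqrt 3 ^ 2 = 3 := Real.sq_sqrt (by norm_num)
  ring_nf
  try rw [h3]
  try norm_num
  try ring

lemma S3_8 : Real.sin (8 * π / 3) = Real.sqrt 3/2 := by
  rw [show (8:ℝ) * π / 3 = 7 * π / 3 + π/3 by ring, Real.sin_add, C3_7, S3_7,
    Real.cos_pi_div_three, Real.sin_pi_div_three]
  have h3 : Real.sqrt 3 ^ 2 = 3 := Real.sq_sqrt (by norm_num)
  ring_nf
  try rw [h3]
  try norm_num
  try ring

lemma C3_9 : Real.cos (9 * π / 3) = -1 := by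
  rw [show (9:ℝ) * π / 3 = 8 * π / 3 + π/3 by ring, Real.cos_add, C3_8, S3_8,
    Real.cos_pi_div_three, Real.sin_pi_div_three]
  have h3 : Real.sqrt 3 ^ 2 = 3 := Real.sq_sqrt (by norm_num)
  ring_nf
  try rw [h3]
  try norm_num
  try ring

lemma S3_9 : Real.sin (9 * π / 3) = 0 := by
  rw [show (9:ℝ) * π / 3 = 8 * π / 3 + π/3 by ring, Real.sin_add, C3_8, S3_8,
    Real.cos_pi_div_three, Real.sin_pi_div_three]
  have h3 : Real.sqrt 3 ^ 2 = 3 := Real.sq_sqrt (by norm_num)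
  ring_nf
  try rw [h3]
  try norm_num
  try ring

lemma C3_10 : Real.cos (10 * π / 3) = -(1/2) := by
  rw [show (10:ℝ) * π / 3 = 9 * π / 3 + π/3 by ring, Real.cos_add, C3_9, S3_9,
    Real.cos_pi_div_three, Real.sin_pi_div_three]
  have h3 : Real.sqrt 3 ^ 2 = 3 := Real.sq_sqrt (by norm_num)
  ring_nf
  try rw [h3]
  try norm_num
  try ring

lemma S3_10 : Real.sin (10 * π / 3) = -(Real.sqrt 3/2) := by
  rw [show (10:ℝ) * π / 3 = 9 * π / 3 + π/3 by ring, Real.sin_add, C3_9, S3_9,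
    Real.cos_pi_div_three, Real.sin_pi_div_three]
  have h3 : Real.sqrt 3 ^ 2 = 3 := Real.sq_sqrt (by norm_num)
  ring_nf
  try rw [h3]
  try norm_num
  try ring

lemma C3_11 : Real.cos (11 * π / 3) = 1/2 := by
  rw [show (11:ℝ) * π / 3 = 10 * π / 3 + π/3 by ring, Real.cos_add, C3_10, S3_10,
    Real.cos_pi_div_three, Real.sin_pi_div_three]
  have h3 : Real.sqrt 3 ^ 2 = 3 := Real.sq_sqrt (by norm_num)
  ring_nf
  try rw [h3]
  try norm_num
  try ring

lemma S3_11 : Real.sin (11 * π / 3) = -(Real.sqrt 3/2) := by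
  rw [show (11:ℝ) * π / 3 = 10 * π / 3 + π/3 by ring, Real.sin_add, C3_10, S3_10,
    Real.cos_pi_div_three, Real.sin_pi_div_three]
  have h3 : Real.sqrt 3 ^ 2 = 3 := Real.sq_sqrt (by norm_num)
  ring_nf
  try rw [h3]
  try norm_num
  try ring

lemma C3_12 : Real.cos (12 * π / 3) = 1 := by
  rw [show (12:ℝ) * π / 3 = 11 * π / 3 + π/3 by ring, Real.cos_add, C3_11, S3_11,
    Real.cos_pi_div_three, Real.sin_pi_div_three]
  have h3 : Real.sqrt 3 ^ 2 = 3 := Real.sq_sqrt (by norm_num)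
  ring_nf
  try rw [h3]
  try norm_num
  try ring

lemma S3_12 : Real.sin (12 * π / 3) = 0 := by
  rw [show (12:ℝ) * π / 3 = 11 * π / 3 + π/3 by ring, Real.sin_add, C3_11, S3_11,
    Real.cos_pi_div_three, Real.sin_pi_div_three]
  have h3 : Real.sqrt 3 ^ 2 = 3 := Real.sq_sqrt (by norm_num)
  ring_nf
  try rw [h3]
  try norm_num
  try ring

lemma C3_13 : Real.cos (13 * π / 3) = 1/2 := by
  rw [show (13:ℝ) * π / 3 = 12 * π / 3 + π/3 by ring, Real.cos_add, C3_12, S3_12,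
    Real.cos_pi_div_three, Real.sin_pi_div_three]
  have h3 : Real.sqrt 3 ^ 2 = 3 := Real.sq_sqrt (by norm_num)
  ring_nf
  try rw [h3]
  try norm_num
  try ring

lemma S3_13 : Real.sin (13 * π / 3) = Real.sqrt 3/2 := by
  rw [show (13:ℝ) * π / 3 = 12 * π / 3 + π/3 by ring, Real.sin_add, C3_12, S3_12,
    Real.cos_pi_div_three, Real.sin_pi_div_three]
  have h3 : Real.sqrt 3 ^ 2 = 3 := Real.sq_sqrt (by norm_num)
  ring_nf
  try rw [h3]
  try norm_num
  try ring

lemma C3_14 : Real.cos (14 * π / 3) = -(1/2) := by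
  rw [show (14:ℝ) * π / 3 = 13 * π / 3 + π/3 by ring, Real.cos_add, C3_13, S3_13,
    Real.cos_pi_div_three, Real.sin_pi_div_three]
  have h3 : Real.sqrt 3 ^ 2 = 3 := Real.sq_sqrt (by norm_num)
  ring_nf
  try rw [h3]
  try norm_num
  try ring

lemma S3_14 : Real.sin (14 * π / 3) = Real.sqrt 3/2 := by
  rw [show (14:ℝ) * π / 3 = 13 * π / 3 + π/3 by ring, Real.sin_add, C3_13, S3_13,
    Real.cos_pi_div_three, Real.sin_pi_div_three]
  have h3 : Real.sqrt 3 ^ 2 = 3 := Real.sq_sqrt (by norm_num)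
  ring_nf
  try rw [h3]
  try norm_num
  try ring

lemma C3_15 : Real.cos (15 * π / 3) = -1 := by
  rw [show (15:ℝ) * π / 3 = 14 * π / 3 + π/3 by ring, Real.cos_add, C3_14, S3_14,
    Real.cos_pi_div_three, Real.sin_pi_div_three]
  have h3 : Real.sqrt 3 ^ 2 = 3 := Real.sq_sqrt (by norm_num)
  ring_nf
  try rw [h3]
  try norm_num
  try ring

lemma S3_15 : Real.sin (15 * π / 3) = 0 := by
  rw [show (15:ℝ) * π / 3 = 14 * π / 3 + π/3 by ring, Real.sin_add, C3_14, S3_14,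
    Real.cos_pi_div_three, Real.sin_pi_div_three]
  have h3 : Real.sqrt 3 ^ 2 = 3 := Real.sq_sqrt (by norm_num)
  ring_nf
  try rw [h3]
  try norm_num
  try ring

lemma C3_16 : Real.cos (16 * π / 3) = -(1/2) := by
  rw [show (16:ℝ) * π / 3 = 15 * π / 3 + π/3 by ring, Real.cos_add, C3_15, S3_15,
    Real.cos_pi_div_three, Real.sin_pi_div_three]
  have h3 : Real.sqrt 3 ^ 2 = 3 := Real.sq_sqrt (by norm_num)
  ring_nf
  try rw [h3]
  try norm_num
  try ring

lemma S3_16 : Real.sin (16 * π / 3) = -(Real.sqrt 3/2) := by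
  rw [show (16:ℝ) * π / 3 = 15 * π / 3 + π/3 by ring, Real.sin_add, C3_15, S3_15,
    Real.cos_pi_div_three, Real.sin_pi_div_three]
  have h3 : Real.sqrt 3 ^ 2 = 3 := Real.sq_sqrt (by norm_num)
  ring_nf
  try rw [h3]
  try norm_num
  try ring

lemma C3_17 : Real.cos (17 * π / 3) = 1/2 := by
  rw [show (17:ℝ) * π / 3 = 16 * π / 3 + π/3 by ring, Real.cos_add, C3_16, S3_16,
    Real.cos_pi_div_three, Real.sin_pi_div_three]
  have h3 : Real.sqrt 3 ^ 2 = 3 := Real.sq_sqrt (by norm_num)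
  ring_nf
  try rw [h3]
  try norm_num
  try ring

lemma S3_17 : Real.sin (17 * π / 3) = -(Real.sqrt 3/2) := by
  rw [show (17:ℝ) * π / 3 = 16 * π / 3 + π/3 by ring, Real.sin_add, C3_16, S3_16,
    Real.cos_pi_div_three, Real.sin_pi_div_three]
  have h3 : Real.sqrt 3 ^ 2 = 3 := Real.sq_sqrt (by norm_num)
  ring_nf
  try rw [h3]
  try norm_num
  try ring

lemma C3_18 : Real.cos (18 * π / 3) = 1 := by
  rw [show (18:ℝ) * π / 3 = 17 * π / 3 + π/3 by ring, Real.cos_add, C3_17, S3_17,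
    Real.cos_pi_div_three, Real.sin_pi_div_three]
  have h3 : Real.sqrt 3 ^ 2 = 3 := Real.sq_sqrt (by norm_num)
  ring_nf
  try rw [h3]
  try norm_num
  try ring

lemma S3_18 : Real.sin (18 * π / 3) = 0 := by
  rw [show (18:ℝ) * π / 3 = 17 * π / 3 + π/3 by ring, Real.sin_add, C3_17, S3_17,
    Real.cos_pi_div_three, Real.sin_pi_div_three]
  have h3 : Real.sqrt 3 ^ 2 = 3 := Real.sq_sqrt (by norm_num)
  ring_nf
  try rw [h3]
  try norm_num
  try ring

lemma C3_19 : Real.cos (19 * π / 3) = 1/2 := by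
  rw [show (19:ℝ) * π / 3 = 18 * π / 3 + π/3 by ring, Real.cos_add, C3_18, S3_18,
    Real.cos_pi_div_three, Real.sin_pi_div_three]
  have h3 : Real.sqrt 3 ^ 2 = 3 := Real.sq_sqrt (by norm_num)
  ring_nf
  try rw [h3]
  try norm_num
  try ring

lemma S3_19 : Real.sin (19 * π / 3) = Real.sqrt 3/2 := by
  rw [show (19:ℝ) * π / 3 = 18 * π / 3 + π/3 by ring, Real.sin_add, C3_18, S3_18,
    Real.cos_pi_div_three, Real.sin_pi_div_three]
  have h3 : Real.sqrt 3 ^ 2 = 3 := Real.sq_sqrt (by norm_num)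
  ring_nf
  try rw [h3]
  try norm_num
  try ring

lemma C3_20 : Real.cos (20 * π / 3) = -(1/2) := by
  rw [show (20:ℝ) * π / 3 = 19 * π / 3 + π/3 by ring, Real.cos_add, C3_19, S3_19,
    Real.cos_pi_div_three, Real.sin_pi_div_three]
  have h3 : Real.sqrt 3 ^ 2 = 3 := Real.sq_sqrt (by norm_num)
  ring_nf
  try rw [h3]
  try norm_num
  try ring

lemma S3_20 : Real.sin (20 * π / 3) = Real.sqrt 3/2 := by
  rw [show (20:ℝ) * π / 3 = 19 * π / 3 + π/3 by ring, Real.sin_add, C3_19, S3_19,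
    Real.cos_pi_div_three, Real.sin_pi_div_three]
  have h3 : Real.sqrt 3 ^ 2 = 3 := Real.sq_sqrt (by norm_num)
  ring_nf
  try rw [h3]
  try norm_num
  try ring

lemma C2_0 : Real.cos (0 * π / 2) = 1 := by
  norm_num

lemma S2_0 : Real.sin (0 * π / 2) = 0 := by
  norm_num

lemma C2_1 : Real.cos (1 * π / 2) = 0 := by
  rw [show (1:ℝ) * π / 2 = 0 * π / 2 + π/2 by ring, Real.cos_add, C2_0, S2_0,
    Real.cos_pi_div_two, Real.sin_pi_div_two]
  norm_num

lemma S2_1 : Real.sin (1 * π / 2) = 1 := by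
  rw [show (1:ℝ) * π / 2 = 0 * π / 2 + π/2 by ring, Real.sin_add, C2_0, S2_0,
    Real.cos_pi_div_two, Real.sin_pi_div_two]
  norm_num

lemma C2_2 : Real.cos (2 * π / 2) = -1 := by
  rw [show (2:ℝ) * π / 2 = 1 * π / 2 + π/2 by ring, Real.cos_add, C2_1, S2_1,
    Real.cos_pi_div_two, Real.sin_pi_div_two]
  norm_num

lemma S2_2 : Real.sin (2 * π / 2) = 0 := by
  rw [show (2:ℝ) * π / 2 = 1 * π / 2 + π/2 by ring, Real.sin_add, C2_1, S2_1,
    Real.cos_pi_div_two, Real.sin_pi_div_two]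
  norm_num

lemma C2_3 : Real.cos (3 * π / 2) = 0 := by
  rw [show (3:ℝ) * π / 2 = 2 * π / 2 + π/2 by ring, Real.cos_add, C2_2, S2_2,
    Real.cos_pi_div_two, Real.sin_pi_div_two]
  norm_num

lemma S2_3 : Real.sin (3 * π / 2) = -1 := by
  rw [show (3:ℝ) * π / 2 = 2 * π / 2 + π/2 by ring, Real.sin_add, C2_2, S2_2,
    Real.cos_pi_div_two, Real.sin_pi_div_two]
  norm_num

lemma C2_4 : Real.cos (4 * π / 2) = 1 := by
  rw [show (4:ℝ) * π / 2 = 3 * π / 2 + π/2 by ring, Real.cos_add, C2_3, S2_3,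
    Real.cos_pi_div_two, Real.sin_pi_div_two]
  norm_num

lemma S2_4 : Real.sin (4 * π / 2) = 0 := by
  rw [show (4:ℝ) * π / 2 = 3 * π / 2 + π/2 by ring, Real.sin_add, C2_3, S2_3,
    Real.cos_pi_div_two, Real.sin_pi_div_two]
  norm_num

lemma C2_5 : Real.cos (5 * π / 2) = 0 := by
  rw [show (5:ℝ) * π / 2 = 4 * π / 2 + π/2 by ring, Real.cos_add, C2_4, S2_4,
    Real.cos_pi_div_two, Real.sin_pi_div_two]
  norm_num

lemma S2_5 : Real.sin (5 * π / 2) = 1 := by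
  rw [show (5:ℝ) * π / 2 = 4 * π / 2 + π/2 by ring, Real.sin_add, C2_4, S2_4,
    Real.cos_pi_div_two, Real.sin_pi_div_two]
  norm_num

lemma C2_6 : Real.cos (6 * π / 2) = -1 := by
  rw [show (6:ℝ) * π / 2 = 5 * π / 2 + π/2 by ring, Real.cos_add, C2_5, S2_5,
    Real.cos_pi_div_two, Real.sin_pi_div_two]
  norm_num

lemma S2_6 : Real.sin (6 * π / 2) = 0 := by
  rw [show (6:ℝ) * π / 2 = 5 * π / 2 + π/2 by ring, Real.sin_add, C2_5, S2_5,
    Real.cos_pi_div_two, Real.sin_pi_div_two]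
  norm_num

lemma C2_7 : Real.cos (7 * π / 2) = 0 := by
  rw [show (7:ℝ) * π / 2 = 6 * π / 2 + π/2 by ring, Real.cos_add, C2_6, S2_6,
    Real.cos_pi_div_two, Real.sin_pi_div_two]
  norm_num

lemma S2_7 : Real.sin (7 * π / 2) = -1 := by
  rw [show (7:ℝ) * π / 2 = 6 * π / 2 + π/2 by ring, Real.sin_add, C2_6, S2_6,
    Real.cos_pi_div_two, Real.sin_pi_div_two]
  norm_num

lemma C2_8 : Real.cos (8 * π / 2) = 1 := by
  rw [show (8:ℝ) * π / 2 = 7 * π / 2 + π/2 by ring, Real.cos_add, C2_7, S2_7,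
    Real.cos_pi_div_two, Real.sin_pi_div_two]
  norm_num

lemma S2_8 : Real.sin (8 * π / 2) = 0 := by
  rw [show (8:ℝ) * π / 2 = 7 * π / 2 + π/2 by ring, Real.sin_add, C2_7, S2_7,
    Real.cos_pi_div_two, Real.sin_pi_div_two]
  norm_num

lemma C2_9 : Real.cos (9 * π / 2) = 0 := by
  rw [show (9:ℝ) * π / 2 = 8 * π / 2 + π/2 by ring, Real.cos_add, C2_8, S2_8,
    Real.cos_pi_div_two, Real.sin_pi_div_two]
  norm_num

lemma S2_9 : Real.sin (9 * π / 2) = 1 := by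
  rw [show (9:ℝ) * π / 2 = 8 * π / 2 + π/2 by ring, Real.sin_add, C2_8, S2_8,
    Real.cos_pi_div_two, Real.sin_pi_div_two]
  norm_num

lemma C2_10 : Real.cos (10 * π / 2) = -1 := by
  rw [show (10:ℝ) * π / 2 = 9 * π / 2 + π/2 by ring, Real.cos_add, C2_9, S2_9,
    Real.cos_pi_div_two, Real.sin_pi_div_two]
  norm_num

lemma S2_10 : Real.sin (10 * π / 2) = 0 := by
  rw [show (10:ℝ) * π / 2 = 9 * π / 2 + π/2 by ring, Real.sin_add, C2_9, S2_9,
    Real.cos_pi_div_two, Real.sin_pi_div_two]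
  norm_num

noncomputable def Haux (k : ℕ) : ℝ := (1 / 72) *
      (3 * (1 + (-1 : ℝ) ^ k) * (1 + k) + 18 * Real.cos (k * π / 2) +
        24 * (Real.cos (k * π / 3) + Real.cos (2 * k * π / 3)) +
        8 * Real.sqrt 3 * (Real.sin (k * π / 3) - Real.sin (2 * k * π / 3)))

lemma Hstep (m : ℕ) : Haux (m+10) = Haux (m+6) + Haux (m+4) - Haux m := by
  have h3 : Real.sqrt 3 ^ 2 = 3 := Real.sq_sqrt (by norm_num)
  unfold Haux
  push_cast
  rw [show ((m:ℝ)+10)*π/2 = (m:ℝ)*π/2 + 10*π/2 by ring,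
      show ((m:ℝ)+6)*π/2 = (m:ℝ)*π/2 + 6*π/2 by ring,
      show ((m:ℝ)+4)*π/2 = (m:ℝ)*π/2 + 4*π/2 by ring,
      show ((m:ℝ)+10)*π/3 = (m:ℝ)*π/3 + 10*π/3 by ring,
      show ((m:ℝ)+6)*π/3 = (m:ℝ)*π/3 + 6*π/3 by ring,
      show ((m:ℝ)+4)*π/3 = (m:ℝ)*π/3 + 4*π/3 by ring,
      show 2*((m:ℝ)+10)*π/3 = 2*(m:ℝ)*π/3 + 20*π/3 by ring,
      show 2*((m:ℝ)+6)*π/3 = 2*(m:ℝ)*π/3 + 12*π/3 by ring,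
      show 2*((m:ℝ)+4)*π/3 = 2*(m:ℝ)*π/3 + 8*π/3 by ring]
  simp only [Real.cos_add, Real.sin_add, C2_10, C2_6, C2_4, C3_10, C3_6, C3_4,
    S3_10, S3_6, S3_4, C3_20, C3_12, C3_8, S3_20, S3_12, S3_8, S2_10, S2_6, S2_4, pow_add]
  try norm_num
  all_goals (ring_nf; try rw [h3]; try norm_num; try ring)

/-- Closed form for the Taylor coefficients of the `Ê₆` Molien series
`(1 - t⁴ + t⁸)/(1 - t⁴ - t⁶ + t¹⁰)`: if `a : ℕ → ℝ` satisfies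
`a 0 = a 6 = a 8 = 1`, `a k = 0` for all other `k < 10`, and
`a k = a (k-4) + a (k-6) - a (k-10)` for `k ≥ 10`, then
`a k = (1/72)·[3(1+(-1)^k)(1+k) + 18cos(kπ/2) + 24(cos(kπ/3)+cos(2kπ/3))
  + 8√3(sin(kπ/3) - sin(2kπ/3))]` for every `k`. -/
theorem E6_coefficients (a : ℕ → ℝ)
    (h0 : a 0 = 1) (h6 : a 6 = 1) (h8 : a 8 = 1)
    (hz : ∀ k, k < 10 → k ≠ 0 → k ≠ 6 → k ≠ 8 → a k = 0)
    (hrec : ∀ k, 10 ≤ k → a k = a (k - 4) + a (k - 6) - a (k - 10)) :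
    ∀ k : ℕ, a k = (1 / 72) *
      (3 * (1 + (-1 : ℝ) ^ k) * (1 + k) + 18 * Real.cos (k * π / 2) +
        24 * (Real.cos (k * π / 3) + Real.cos (2 * k * π / 3)) +
        8 * Real.sqrt 3 * (Real.sin (k * π / 3) - Real.sin (2 * k * π / 3))) := by
  have h3 : Real.sqrt 3 ^ 2 = 3 := Real.sq_sqrt (by norm_num)
  have key : ∀ k : ℕ, a k = Haux k := by
    intro k
    induction k using Nat.strong_induction_on with
    | _ k ih =>
      by_cases hk : k < 10
      · interval_cases k
        · rw [h0]
          unfold Haux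
          norm_num [C2_0, C3_0, S3_0]
          all_goals (ring_nf; try rw [h3]; try norm_num; try ring)
        · rw [hz 1 (by norm_num) (by norm_num) (by norm_num) (by norm_num)]
          unfold Haux
          norm_num [C2_1, C3_1, C3_2, S3_1, S3_2]
          all_goals (ring_nf; try rw [h3]; try norm_num; try ring)
        · rw [hz 2 (by norm_num) (by norm_num) (by norm_num) (by norm_num)]
          unfold Haux
          norm_num [C2_2, C3_2, C3_4, S3_2, S3_4]
          all_goals (ring_nf; try rw [h3]; try norm_num; try ring)
        · rw [hz 3 (by norm_num) (by norm_num) (by norm_num) (by norm_num)]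
          unfold Haux
          norm_num [C2_3, C3_3, C3_6, S3_3, S3_6]
          all_goals (ring_nf; try rw [h3]; try norm_num; try ring)
        · rw [hz 4 (by norm_num) (by norm_num) (by norm_num) (by norm_num)]
          unfold Haux
          norm_num [C2_4, C3_4, C3_8, S3_4, S3_8]
          all_goals (ring_nf; try rw [h3]; try norm_num; try ring)
        · rw [hz 5 (by norm_num) (by norm_num) (by norm_num) (by norm_num)]
          unfold Haux
          norm_num [C2_5, C3_10, C3_5, S3_10, S3_5]
          all_goals (ring_nf; try rw [h3]; try norm_num; try ring)
        · rw [h6]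
          unfold Haux
          norm_num [C2_6, C3_12, C3_6, S3_12, S3_6]
          all_goals (ring_nf; try rw [h3]; try norm_num; try ring)
        · rw [hz 7 (by norm_num) (by norm_num) (by norm_num) (by norm_num)]
          unfold Haux
          norm_num [C2_7, C3_14, C3_7, S3_14, S3_7]
          all_goals (ring_nf; try rw [h3]; try norm_num; try ring)
        · rw [h8]
          unfold Haux
          norm_num [C2_8, C3_16, C3_8, S3_16, S3_8]
          all_goals (ring_nf; try rw [h3]; try norm_num; try ring)
        · rw [hz 9 (by norm_num) (by norm_num) (by norm_num) (by norm_num)]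
          unfold Haux
          norm_num [C2_9, C3_18, C3_9, S3_18, S3_9]
          all_goals (ring_nf; try rw [h3]; try norm_num; try ring)
      · push_neg at hk
        obtain ⟨m, rfl⟩ : ∃ m, k = m + 10 := ⟨k - 10, by omega⟩
        have hr := hrec (m+10) (by omega)
        rw [show m+10-4 = m+6 by omega, show m+10-6 = m+4 by omega,
            show m+10-10 = m by omega] at hr
        rw [hr, ih (m+6) (by omega), ih (m+4) (by omega), ih m (by omega)]
        exact (Hstep m).symm
  intro k
  rw [key k]
  rfl
end

section
/- Suppose a : ℕ → ℝ satisfies a(0) = a(8) = a(12) = 1, a(k) = 0 for all k < 14 with k ∉ {0, 8, 12}, and a(k) = a(k−6) + a(k−8) − a(k−14) for all k ≥ 14. Then for every k ∈ ℕ, a(k) = (1/144)·[ 3(1 + (−1)^k)(1 + k) + 2·cos(kπ/2)·( 27 + 24·cos(kπ/6) + 18·(cos(kπ/4) − sin(kπ/4)) − 8√3·sin(kπ/6) ) ]. (These a(k) are the Taylor coefficients of the Ê₇ Molien series (1 − t⁶ + t¹²)/(1 − t⁶ − t⁸ + t¹⁴), counting single-trace gauge invariants of degree k for the orbifold ℂ²/Ê₇;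 in particular a(24m) = 1 + m.) -/
open Real

noncomputable def E7f (k : ℕ) : ℝ := (1 / 144) *
      (3 * (1 + (-1 : ℝ) ^ k) * (1 + k) +
        2 * Real.cos (k * π / 2) *
          (27 + 24 * Real.cos (k * π / 6) +
            18 * (Real.cos (k * π / 4) - Real.sin (k * π / 4)) -
            8 * Real.sqrt 3 * Real.sin (k * π / 6)))

lemma E7f_shift (m : ℕ) : E7f (m + 14) = E7f (m + 8) + E7f (m + 6) - E7f m := by
  have c2 : ∀ x : ℝ, Real.cos (x + (π + 2*π + 2*π + 2*π)) = -Real.cos x := by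
    intro x; rw [show x + (π + 2*π + 2*π + 2*π) = ((x + π) + 2*π + 2*π) + 2*π by ring]
    rw [Real.cos_add_two_pi, Real.cos_add_two_pi, Real.cos_add_two_pi, Real.cos_add_pi]
  have c6 : ∀ x : ℝ, Real.cos (x + (π/3 + 2*π)) = Real.cos x * (1/2) - Real.sin x * (Real.sqrt 3/2) := by
    intro x; rw [show x + (π/3 + 2*π) = (x + π/3) + 2*π by ring, Real.cos_add_two_pi,
      Real.cos_add, Real.cos_pi_div_three, Real.sin_pi_div_three]
  have s6 : ∀ x : ℝ, Real.sin (x + (π/3 + 2*π)) = Real.sin x * (1/2) + Real.cos x * (Real.sqrt 3/2) := by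
    intro x; rw [show x + (π/3 + 2*π) = (x + π/3) + 2*π by ring, Real.sin_add_two_pi,
      Real.sin_add, Real.cos_pi_div_three, Real.sin_pi_div_three]
  have c4 : ∀ x : ℝ, Real.cos (x + (π + π/2 + 2*π)) = Real.sin x := by
    intro x; rw [show x + (π + π/2 + 2*π) = ((x + π) + π/2) + 2*π by ring, Real.cos_add_two_pi,
      Real.cos_add_pi_div_two, Real.sin_add_pi]; ring
  have s4 : ∀ x : ℝ, Real.sin (x + (π + π/2 + 2*π)) = -Real.cos x := by
    intro x; rw [show x + (π + π/2 + 2*π) = ((x + π) + π/2) + 2*π by ring, Real.sin_add_two_pi,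
      Real.sin_add_pi_div_two, Real.cos_add_pi]
  have c2' : ∀ x : ℝ, Real.cos (x + (2*π + 2*π)) = Real.cos x := by
    intro x; rw [show x + (2*π + 2*π) = (x + 2*π) + 2*π by ring, Real.cos_add_two_pi, Real.cos_add_two_pi]
  have c6' : ∀ x : ℝ, Real.cos (x + (π/3 + π)) = -(Real.cos x * (1/2) - Real.sin x * (Real.sqrt 3/2)) := by
    intro x; rw [show x + (π/3 + π) = (x + π/3) + π by ring, Real.cos_add_pi,
      Real.cos_add, Real.cos_pi_div_three, Real.sin_pi_div_three]
  have s6' : ∀ x : ℝ, Real.sin (x + (π/3 + π)) = -(Real.sin x * (1/2) + Real.cos x * (Real.sqrt 3/2)) := by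
    intro x; rw [show x + (π/3 + π) = (x + π/3) + π by ring, Real.sin_add_pi,
      Real.sin_add, Real.cos_pi_div_three, Real.sin_pi_div_three]
  have c2'' : ∀ x : ℝ, Real.cos (x + (π + 2*π)) = -Real.cos x := by
    intro x; rw [show x + (π + 2*π) = (x + π) + 2*π by ring, Real.cos_add_two_pi, Real.cos_add_pi]
  have c4'' : ∀ x : ℝ, Real.cos (x + (π + π/2)) = Real.sin x := by
    intro x; rw [show x + (π + π/2) = (x + π) + π/2 by ring, Real.cos_add_pi_div_two, Real.sin_add_pi]; ring
  have s4'' : ∀ x : ℝ, Real.sin (x + (π + π/2)) = -Real.cos x := by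
    intro x; rw [show x + (π + π/2) = (x + π) + π/2 by ring, Real.sin_add_pi_div_two, Real.cos_add_pi]
  simp only [E7f]
  push_cast
  rw [show ((m:ℝ)+14)*π/2 = m*π/2 + (π + 2*π + 2*π + 2*π) by ring,
      show ((m:ℝ)+14)*π/6 = m*π/6 + (π/3 + 2*π) by ring,
      show ((m:ℝ)+14)*π/4 = m*π/4 + (π + π/2 + 2*π) by ring,
      show ((m:ℝ)+8)*π/2 = m*π/2 + (2*π + 2*π) by ring,
      show ((m:ℝ)+8)*π/6 = m*π/6 + (π/3 + π) by ring,
      show ((m:ℝ)+8)*π/4 = m*π/4 + (2*π) by ring,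
      show ((m:ℝ)+6)*π/2 = m*π/2 + (π + 2*π) by ring,
      show ((m:ℝ)+6)*π/6 = m*π/6 + π by ring,
      show ((m:ℝ)+6)*π/4 = m*π/4 + (π + π/2) by ring,
      c2, c6, s6, c4, s4, c2', c6', s6', c4'', s4'', c2'',
      Real.cos_add_two_pi, Real.sin_add_two_pi, Real.cos_add_pi, Real.sin_add_pi,
      pow_add, pow_add, pow_add]
  ring_nf

lemma E7f_odd (j : ℕ) : E7f (2*j+1) = 0 := by
  have hc : Real.cos ((2*(j:ℝ)+1)*π/2) = 0 :=
    Real.cos_eq_zero_iff.mpr ⟨j, by push_cast; ring⟩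
  have hp : (-1 : ℝ) ^ (2*j+1) = -1 := Odd.neg_one_pow ⟨j, by ring⟩
  simp only [E7f]
  push_cast
  rw [hp, hc]
  ring

lemma E7f_0 : E7f 0 = 1 := by
  simp only [E7f]; norm_num

lemma E7f_2 : E7f 2 = 0 := by
  have h3 : Real.sqrt 3 * Real.sqrt 3 = 3 := Real.mul_self_sqrt (by norm_num)
  simp only [E7f]
  rw [show ((2:ℕ):ℝ)*π/2 = π by push_cast; ring,
      show ((2:ℕ):ℝ)*π/6 = π/3 by push_cast; ring,
      show ((2:ℕ):ℝ)*π/4 = π/2 by push_cast; ring,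
      Real.cos_pi, Real.cos_pi_div_three, Real.sin_pi_div_three,
      Real.cos_pi_div_two, Real.sin_pi_div_two]
  push_cast; nlinarith [h3]

lemma E7f_4 : E7f 4 = 0 := by
  have h3 : Real.sqrt 3 * Real.sqrt 3 = 3 := Real.mul_self_sqrt (by norm_num)
  simp only [E7f]
  rw [show ((4:ℕ):ℝ)*π/2 = 2*π by push_cast; ring,
      show ((4:ℕ):ℝ)*π/6 = π - π/3 by push_cast; ring,
      show ((4:ℕ):ℝ)*π/4 = π by push_cast; ring,
      Real.cos_two_pi, Real.cos_pi_sub, Real.sin_pi_sub,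
      Real.cos_pi_div_three, Real.sin_pi_div_three, Real.cos_pi, Real.sin_pi]
  push_cast; nlinarith [h3]

lemma E7f_6 : E7f 6 = 0 := by
  simp only [E7f]
  rw [show ((6:ℕ):ℝ)*π/2 = π + 2*π by push_cast; ring,
      show ((6:ℕ):ℝ)*π/6 = π by push_cast; ring,
      show ((6:ℕ):ℝ)*π/4 = π + π/2 by push_cast; ring,
      Real.cos_add_two_pi, Real.cos_add_pi_div_two, Real.sin_add_pi_div_two,
      Real.cos_pi, Real.sin_pi]
  push_cast; ring

lemma E7f_8 : E7f 8 = 1 := by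
  have h3 : Real.sqrt 3 * Real.sqrt 3 = 3 := Real.mul_self_sqrt (by norm_num)
  simp only [E7f]
  rw [show ((8:ℕ):ℝ)*π/2 = 2*π + 2*π by push_cast; ring,
      show ((8:ℕ):ℝ)*π/6 = π/3 + π by push_cast; ring,
      show ((8:ℕ):ℝ)*π/4 = 0 + 2*π by push_cast; ring,
      Real.cos_add_two_pi, Real.cos_add_two_pi, Real.sin_add_two_pi,
      Real.cos_add_pi, Real.sin_add_pi,
      Real.cos_pi_div_three, Real.sin_pi_div_three, Real.cos_two_pi,
      Real.cos_zero, Real.sin_zero]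
  push_cast; nlinarith [h3]

lemma E7f_10 : E7f 10 = 0 := by
  have h3 : Real.sqrt 3 * Real.sqrt 3 = 3 := Real.mul_self_sqrt (by norm_num)
  simp only [E7f]
  rw [show ((10:ℕ):ℝ)*π/2 = (π + 2*π) + 2*π by push_cast; ring,
      show ((10:ℕ):ℝ)*π/6 = (π - π/3) + π by push_cast; ring,
      show ((10:ℕ):ℝ)*π/4 = π/2 + 2*π by push_cast; ring,
      Real.cos_add_two_pi, Real.cos_add_two_pi, Real.cos_add_two_pi, Real.sin_add_two_pi,
      Real.cos_add_pi, Real.sin_add_pi, Real.cos_pi_sub, Real.sin_pi_sub,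
      Real.cos_pi_div_three, Real.sin_pi_div_three, Real.cos_pi,
      Real.cos_pi_div_two, Real.sin_pi_div_two]
  push_cast; nlinarith [h3]

lemma E7f_12 : E7f 12 = 1 := by
  simp only [E7f]
  rw [show ((12:ℕ):ℝ)*π/2 = (2*π + 2*π) + 2*π by push_cast; ring,
      show ((12:ℕ):ℝ)*π/6 = 2*π by push_cast; ring,
      show ((12:ℕ):ℝ)*π/4 = (π + 2*π) by push_cast; ring,
      Real.cos_add_two_pi, Real.cos_add_two_pi, Real.cos_add_two_pi, Real.sin_add_two_pi,
      Real.cos_two_pi, Real.sin_two_pi, Real.cos_pi, Real.sin_pi]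
  push_cast; ring

/-- Closed form for the Taylor coefficients of the `Ê₇` Molien series
`(1 - t⁶ + t¹²)/(1 - t⁶ - t⁸ + t¹⁴)`: if `a : ℕ → ℝ` satisfies
`a 0 = a 8 = a 12 = 1`, `a k = 0` for all other `k < 14`, and
`a k = a (k-6) + a (k-8) - a (k-14)` for `k ≥ 14`, then
`a k = (1/144)·[3(1+(-1)^k)(1+k) + 2cos(kπ/2)(27 + 24cos(kπ/6)
  + 18(cos(kπ/4) - sin(kπ/4)) - 8√3 sin(kπ/6))]` for every `k`. -/
theorem E7_coefficients (a : ℕ → ℝ)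
    (h0 : a 0 = 1) (h8 : a 8 = 1) (h12 : a 12 = 1)
    (hz : ∀ k, k < 14 → k ≠ 0 → k ≠ 8 → k ≠ 12 → a k = 0)
    (hrec : ∀ k, 14 ≤ k → a k = a (k - 6) + a (k - 8) - a (k - 14)) :
    ∀ k : ℕ, a k = (1 / 144) *
      (3 * (1 + (-1 : ℝ) ^ k) * (1 + k) +
        2 * Real.cos (k * π / 2) *
          (27 + 24 * Real.cos (k * π / 6) +
            18 * (Real.cos (k * π / 4) - Real.sin (k * π / 4)) -
            8 * Real.sqrt 3 * Real.sin (k * π / 6))) := by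
  have key : ∀ k, a k = E7f k := by
    intro k
    induction k using Nat.strong_induction_on with
    | _ k ih =>
      rcases lt_or_ge k 14 with hk | hk
      · interval_cases k
        · rw [h0, E7f_0]
        · rw [hz 1 (by norm_num) (by norm_num) (by norm_num) (by norm_num)]
          simpa using (E7f_odd 0).symm
        · rw [hz 2 (by norm_num) (by norm_num) (by norm_num) (by norm_num), E7f_2]
        · rw [hz 3 (by norm_num) (by norm_num) (by norm_num) (by norm_num)]
          simpa using (E7f_odd 1).symm
        · rw [hz 4 (by norm_num) (by norm_num) (by norm_num) (by norm_num), E7f_4]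
        · rw [hz 5 (by norm_num) (by norm_num) (by norm_num) (by norm_num)]
          simpa using (E7f_odd 2).symm
        · rw [hz 6 (by norm_num) (by norm_num) (by norm_num) (by norm_num), E7f_6]
        · rw [hz 7 (by norm_num) (by norm_num) (by norm_num) (by norm_num)]
          simpa using (E7f_odd 3).symm
        · rw [h8, E7f_8]
        · rw [hz 9 (by norm_num) (by norm_num) (by norm_num) (by norm_num)]
          simpa using (E7f_odd 4).symm
        · rw [hz 10 (by norm_num) (by norm_num) (by norm_num) (by norm_num), E7f_10]
        · rw [hz 11 (by norm_num) (by norm_num) (by norm_num) (by norm_num)]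
          simpa using (E7f_odd 5).symm
        · rw [h12, E7f_12]
        · rw [hz 13 (by norm_num) (by norm_num) (by norm_num) (by norm_num)]
          simpa using (E7f_odd 6).symm
      · obtain ⟨m, rfl⟩ : ∃ m, k = m + 14 := ⟨k - 14, by omega⟩
        rw [hrec _ (by omega), show m + 14 - 6 = m + 8 by omega,
            show m + 14 - 8 = m + 6 by omega, show m + 14 - 14 = m by omega,
            ih (m+8) (by omega), ih (m+6) (by omega), ih m (by omega), ← E7f_shift]
  intro k
  simpa only [E7f] using key k
end

section
/- Let n ≥ 1 and define a : ℕ → ℝ as follows: if n is odd, a(k) = ⌊k/n⌋ + (1 + (−1)^{k mod n})/2; if n is even, a(k) = (⌊k/n⌋ + 1/2)·(1 + (−1)^{k mod n}). Then for every t ∈ ℂ with |t| < 1, ∑_{k≥0} a(k)·t^k = (1 + t^n) / [(1 − t²)(1 − t^n)]. (The right-hand side is the Molien/Hilbert series of the Â_{n−1} orbifold ℂ²/ℤ_n, so a(k) counts the single-trace gauge invariant operators of degree k; in particular, for odd n, a(2βn) = 2β and, for even n, a(2βn) = 4β + 1.) -/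
/-!
Writing `k = n q + r` with `r < n`, the coefficient is `q A(r) + B(r)` for two sequences `A`, `B`
of the residue, so on each residue class the series is an arithmetico-geometric series in `t ^ n`.
Summing the `n` classes leaves the finite sums `∑_{r<n} A(r) t^r` and `∑_{r<n} B(r) t^r`, which
are combinations of the geometric sums of `t` and `-t`; the parity of `n` decides whether
`(-t)^n` is `t^n` or `-t^n`.
-/

open Finset

theorem hasSum_of_hasSum_mul_add {M : Type*} [AddCommMonoid M] [TopologicalSpace M]
    [ContinuousAdd M] {f : ℕ → M} {n : ℕ} (hn : n ≠ 0) {S : ℕ → M}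
    (hS : ∀ r < n, HasSum (fun q => f (n * q + r)) (S r)) :
    HasSum f (∑ r ∈ range n, S r) := by
  have hres : ∀ r ∈ range n, HasSum (fun k => if k % n = r then f k else 0) (S r) := by
    intro r hr
    have hr : r < n := mem_range.mp hr
    have hinj : Function.Injective (fun q => n * q + r) := fun a b h => by
      simpa [hn] using h
    refine (hinj.hasSum_iff fun k hk => if_neg fun hkr => hk ⟨k / n, ?_⟩).mp ?_
    · rw [← hkr]; exact Nat.div_add_mod k n
    · simpa [Function.comp_def, Nat.mul_add_mod, Nat.mod_eq_of_lt hr] using hS r hr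
  convert hasSum_sum hres using 2 with k
  rw [sum_ite_eq, if_pos (mem_range.mpr (Nat.mod_lt k (Nat.pos_of_ne_zero hn)))]

section NormedField

variable {𝕜 : Type*} [NormedField 𝕜]

theorem hasSum_coe_mul_add_mul_geometric {x : 𝕜} (hx : ‖x‖ < 1) (a b : 𝕜) :
    HasSum (fun q : ℕ => (q * a + b) * x ^ q) (a * (x / (1 - x) ^ 2) + b / (1 - x)) := by
  convert! ((hasSum_coe_mul_geometric_of_norm_lt_one hx).mul_left a).add
    ((hasSum_geometric_of_norm_lt_one hx).mul_left b) using 1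
  · ext q; ring
  · rw [div_eq_mul_inv b]

theorem hasSum_div_mul_add_mod_mul_pow {n : ℕ} (hn : n ≠ 0) (A B : ℕ → 𝕜) {t : 𝕜}
    (ht : ‖t‖ < 1) :
    HasSum (fun k => ((k / n : ℕ) * A (k % n) + B (k % n)) * t ^ k)
      (t ^ n / (1 - t ^ n) ^ 2 * ∑ r ∈ range n, A r * t ^ r
        + 1 / (1 - t ^ n) * ∑ r ∈ range n, B r * t ^ r) := by
  have htn : ‖t ^ n‖ < 1 := by
    rw [norm_pow]; exact pow_lt_one₀ (norm_nonneg t) ht hn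
  convert hasSum_of_hasSum_mul_add hn (S := fun r =>
    (A r * (t ^ n / (1 - t ^ n) ^ 2) + B r / (1 - t ^ n)) * t ^ r) (fun r hr => ?_) using 1
  · simp only [mul_sum, ← sum_add_distrib]
    exact sum_congr rfl fun r _ => by ring
  · convert! (hasSum_coe_mul_add_mul_geometric htn (A r) (B r)).mul_right (t ^ r) using 1
    ext q
    rw [Nat.mul_add_div (Nat.pos_of_ne_zero hn), Nat.div_eq_of_lt hr, add_zero, Nat.mul_add_mod,
      Nat.mod_eq_of_lt hr, pow_add, pow_mul]
    ring

end NormedField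

theorem sum_range_one_add_neg_one_pow_mul_pow {K : Type*} [Field K] {t : K} (ht : t ≠ 1)
    (ht' : t ≠ -1) (n : ℕ) :
    ∑ r ∈ range n, (1 + (-1) ^ r) * t ^ r
      = (1 - t ^ n) / (1 - t) + (1 - (-t) ^ n) / (1 + t) := by
  have h1 : 1 - t ≠ 0 := sub_ne_zero.mpr (Ne.symm ht)
  have h2 : 1 + t ≠ 0 := by
    rw [add_comm, ← sub_neg_eq_add]; exact sub_ne_zero.mpr ht'
  have h3 : -t ≠ 1 := fun h => ht' (by rw [← h, neg_neg])
  calc ∑ r ∈ range n, (1 + (-1) ^ r) * t ^ r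
      = ∑ r ∈ range n, t ^ r + ∑ r ∈ range n, (-t) ^ r := by
        rw [← sum_add_distrib]; exact sum_congr rfl fun r _ => by rw [neg_pow]; ring
    _ = (1 - t ^ n) / (1 - t) + (1 - (-t) ^ n) / (1 + t) := by
        rw [geom_sum_eq ht, geom_sum_eq h3]
        field_simp
        ring

/-- Closed form for the coefficients of the `Â_{n-1}` Molien series: for `n ≥ 1`
and `|t| < 1`, the series `∑_{k≥0} a(k) t^k` with
`a(k) = ⌊k/n⌋ + (1 + (-1)^{k mod n})/2` for odd `n`, and
`a(k) = (⌊k/n⌋ + 1/2)(1 + (-1)^{k mod n})` for even `n`, converges to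
`(1 + t^n)/((1 - t²)(1 - t^n))`, the Hilbert series of `ℂ²/ℤ_n`. -/
theorem A_series_coefficients (n : ℕ) (hn : 1 ≤ n) (t : ℂ) (ht : ‖t‖ < 1) :
    HasSum
      (fun k : ℕ =>
        (if Odd n then ((k / n : ℕ) : ℂ) + (1 + (-1 : ℂ) ^ (k % n)) / 2
         else (((k / n : ℕ) : ℂ) + 1 / 2) * (1 + (-1 : ℂ) ^ (k % n))) * t ^ k)
      ((1 + t ^ n) / ((1 - t ^ 2) * (1 - t ^ n))) := by
  have hn0 : n ≠ 0 := Nat.one_le_iff_ne_zero.mp hn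
  have ht1 : t ≠ 1 := by rintro rfl; simp at ht
  have ht1' : t ≠ -1 := by rintro rfl; simp at ht
  have h1 : 1 - t ≠ 0 := sub_ne_zero.mpr (Ne.symm ht1)
  have h2 : 1 + t ≠ 0 := by
    rw [add_comm, ← sub_neg_eq_add]; exact sub_ne_zero.mpr ht1'
  have htn : 1 - t ^ n ≠ 0 := by
    refine sub_ne_zero.mpr fun h => ?_
    have : ‖t ^ n‖ < 1 := by rw [norm_pow]; exact pow_lt_one₀ (norm_nonneg t) ht hn0
    simp [← h] at this
  have hsq : (1 : ℂ) - t ^ 2 = (1 - t) * (1 + t) := by ring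
  have hB : ∑ r ∈ range n, (1 + (-1 : ℂ) ^ r) / 2 * t ^ r
      = ((1 - t ^ n) / (1 - t) + (1 - (-t) ^ n) / (1 + t)) / 2 := by
    simp only [div_mul_eq_mul_div, ← sum_div, sum_range_one_add_neg_one_pow_mul_pow ht1 ht1']
  rcases Nat.even_or_odd n with heven | hodd
  · simp only [Nat.not_odd_iff_even.mpr heven, if_false]
    convert! hasSum_div_mul_add_mod_mul_pow hn0 (fun r => 1 + (-1) ^ r)
      (fun r => (1 + (-1) ^ r) / 2) ht using 1
    · ext k; ring
    · rw [hB, sum_range_one_add_neg_one_pow_mul_pow ht1 ht1', heven.neg_pow, hsq]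
      field_simp
      ring
  · simp only [hodd, if_true]
    convert! hasSum_div_mul_add_mod_mul_pow hn0 (fun _ => 1) (fun r => (1 + (-1) ^ r) / 2) ht
      using 1
    · ext k; ring
    · simp only [hB, one_mul, geom_sum_eq ht1, hodd.neg_pow, hsq]
      field_simp
      ring
end

section
/- Let n ≥ 1 and define b : ℕ → ℝ by b(k) = (1 + (−1)^k)/2 + ⌊(k mod 2n)/n⌋ + 2·⌊k/(2n)⌋. Then for every t ∈ ℂ with |t| < 1, ∑_{k≥0} b(k)·t^k = (1 + t^{n+1}) / [(1 − t²)(1 − t^n)]. Consequently, substituting t → t², the coefficients a(k) of the Molien series (1 + t^{2n+2})/((1 − t⁴)(1 − t^{2n})) of the binary dihedral orbifold ℂ²/D̂_{n+2} satisfy a(k) = 0 for k odd and a(k) = b(k/2) for k even. -/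
/-!
Since `(k mod 2n)/n + 2⌊k/2n⌋ = ⌊k/n⌋` and `(1 + (-1)^k)/2` is the indicator of even `k`, the
series splits as `∑_{k even} t^k + ∑_k ⌊k/n⌋ t^k`. The first is `1/(1 - t²)`. In the second,
write `k = qn + r` with `r < n`: it factors as `(∑_q q t^{qn}) (∑_{r<n} t^r)
= t^n/(1 - t^n)² · (1 - t^n)/(1 - t)`. Adding the two gives `(1 + t^{n+1})/((1 - t²)(1 - t^n))`.
The Molien series is this function at `t²`, whose expansion spreads the coefficients `b(m)` onto
the even degrees `2m`.
-/

theorem hasSum_ite_even_div_two_iff {M : Type*} [AddCommMonoid M] [TopologicalSpace M]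
    {f : ℕ → M} {a : M} :
    HasSum (fun k => if Even k then f (k / 2) else 0) a ↔ HasSum f a := by
  rw [← (mul_right_injective₀ (two_ne_zero' ℕ)).hasSum_iff]
  · congr! 1
    ext m
    simp
  · rintro k hk
    simp only [Set.mem_range, not_exists] at hk
    rw [if_neg fun ⟨m, hm⟩ => hk m (by omega)]

theorem Nat.mod_two_mul_div_add_two_mul_div (k n : ℕ) :
    k % (2 * n) / n + 2 * (k / (2 * n)) = k / n := by
  rw [mul_comm 2 n, Nat.mod_mul_right_div_self, ← Nat.div_div_eq_div_mul, Nat.mod_add_div]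

theorem one_add_neg_one_pow_div_two {K : Type*} [DivisionRing K] [NeZero (2 : K)] (k : ℕ) :
    (1 + (-1 : K) ^ k) / 2 = if Even k then 1 else 0 := by
  rcases Nat.even_or_odd k with hk | hk
  · rw [hk.neg_one_pow, if_pos hk, one_add_one_eq_two, div_self two_ne_zero]
  · rw [hk.neg_one_pow, if_neg (Nat.not_even_iff_odd.mpr hk), add_neg_cancel, zero_div]

section NormedField

variable {𝕜 : Type*} [NormedField 𝕜] {t : 𝕜}

theorem norm_pow_lt_one_s13 (ht : ‖t‖ < 1) {n : ℕ} (hn : n ≠ 0) : ‖t ^ n‖ < 1 := by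
  rw [norm_pow]
  exact pow_lt_one₀ (norm_nonneg t) ht hn

theorem one_sub_ne_zero_of_norm_lt_one_s13 (ht : ‖t‖ < 1) : 1 - t ≠ 0 :=
  (isUnit_one_sub_of_norm_lt_one ht).ne_zero

theorem hasSum_ite_even_mul_geometric (ht : ‖t‖ < 1) :
    HasSum (fun k : ℕ => (if Even k then 1 else 0) * t ^ k) (1 - t ^ 2)⁻¹ := by
  refine (hasSum_ite_even_div_two_iff.mpr
    (hasSum_geometric_of_norm_lt_one (norm_pow_lt_one_s13 ht two_ne_zero))).congr_fun fun k => ?_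
  split_ifs with hk
  · rw [one_mul, ← pow_mul, Nat.mul_div_cancel' hk.two_dvd]
  · rw [zero_mul]

variable [CompleteSpace 𝕜]

theorem hasSum_nat_div_mul_geometric {n : ℕ} (hn : n ≠ 0) (ht : ‖t‖ < 1) :
    HasSum (fun k : ℕ => ((k / n : ℕ) : 𝕜) * t ^ k) (t ^ n / ((1 - t) * (1 - t ^ n))) := by
  have : NeZero n := ⟨hn⟩
  have htn := norm_pow_lt_one_s13 ht hn
  have hquot : HasSum (fun q : ℕ => (q : 𝕜) * (t ^ n) ^ q) (t ^ n / (1 - t ^ n) ^ 2) :=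
    hasSum_coe_mul_geometric_of_norm_lt_one htn
  have hrem : HasSum (fun r : Fin n => t ^ (r : ℕ)) ((1 - t ^ n) / (1 - t)) := by
    rw [← mul_neg_geom_sum, mul_div_cancel_left₀ _ (one_sub_ne_zero_of_norm_lt_one_s13 ht),
      ← Fin.sum_univ_eq_sum_range]
    exact hasSum_fintype _
  have hprod : Summable fun p : ℕ × Fin n => (p.1 : 𝕜) * (t ^ n) ^ p.1 * t ^ (p.2 : ℕ) :=
    summable_mul_of_summable_norm (f := fun q : ℕ => (q : 𝕜) * (t ^ n) ^ q)
      (g := fun r : Fin n => t ^ (r : ℕ))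
      (by simpa using summable_norm_pow_mul_geometric_of_norm_lt_one 1 htn) .of_finite
  have hval : t ^ n / (1 - t ^ n) ^ 2 * ((1 - t ^ n) / (1 - t)) =
      t ^ n / ((1 - t) * (1 - t ^ n)) := by
    have := one_sub_ne_zero_of_norm_lt_one_s13 ht
    have := one_sub_ne_zero_of_norm_lt_one_s13 htn
    field_simp
  rw [← (Nat.divModEquiv n).symm.hasSum_iff, ← hval]
  refine (hquot.mul hrem hprod).congr_fun fun ⟨q, r⟩ => ?_
  simp only [Function.comp_apply, Nat.divModEquiv_symm_apply]
  rw [mul_comm q n, Nat.mul_add_div (Nat.pos_of_ne_zero hn), Nat.div_eq_of_lt r.isLt, add_zero,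
    pow_add, pow_mul]
  ring

theorem hasSum_binaryDihedral_coeff_mul_pow [NeZero (2 : 𝕜)] {n : ℕ} (hn : n ≠ 0)
    (ht : ‖t‖ < 1) :
    HasSum
      (fun k : ℕ =>
        ((1 + (-1 : 𝕜) ^ k) / 2 + (((k % (2 * n)) / n : ℕ) : 𝕜) +
          2 * ((k / (2 * n) : ℕ) : 𝕜)) * t ^ k)
      ((1 + t ^ (n + 1)) / ((1 - t ^ 2) * (1 - t ^ n))) := by
  have hsum := (hasSum_ite_even_mul_geometric ht).add (hasSum_nat_div_mul_geometric hn ht)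
  have hval : (1 - t ^ 2)⁻¹ + t ^ n / ((1 - t) * (1 - t ^ n)) =
      (1 + t ^ (n + 1)) / ((1 - t ^ 2) * (1 - t ^ n)) := by
    have := one_sub_ne_zero_of_norm_lt_one_s13 ht
    have := one_sub_ne_zero_of_norm_lt_one_s13 (norm_pow_lt_one_s13 ht two_ne_zero)
    have := one_sub_ne_zero_of_norm_lt_one_s13 (norm_pow_lt_one_s13 ht hn)
    field_simp
    ring
  have hdiv (k : ℕ) :
      (((k % (2 * n)) / n : ℕ) : 𝕜) + 2 * ((k / (2 * n) : ℕ) : 𝕜) = ((k / n : ℕ) : 𝕜) := by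
    rw [← Nat.mod_two_mul_div_add_two_mul_div k n]
    push_cast
    rfl
  rw [← hval]
  refine hsum.congr_fun fun k => ?_
  rw [add_assoc, hdiv, one_add_neg_one_pow_div_two, add_mul]

end NormedField

/-- Coefficients of the binary dihedral `D̂_{n+2}` Molien series: with
`b(k) = (1 + (-1)^k)/2 + ⌊(k mod 2n)/n⌋ + 2⌊k/(2n)⌋`, for `|t| < 1` one has
`∑_{k≥0} b(k) t^k = (1 + t^{n+1})/((1 - t²)(1 - t^n))`; consequently the
coefficients of the Molien series `(1 + t^{2n+2})/((1 - t⁴)(1 - t^{2n}))` of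
`ℂ²/D̂_{n+2}` vanish in odd degree and equal `b(k/2)` in even degree `k`. -/
theorem D_series_coefficients (n : ℕ) (hn : 1 ≤ n) (t : ℂ) (ht : ‖t‖ < 1) :
    HasSum
      (fun k : ℕ =>
        ((1 + (-1 : ℂ) ^ k) / 2 + (((k % (2 * n)) / n : ℕ) : ℂ) +
          2 * ((k / (2 * n) : ℕ) : ℂ)) * t ^ k)
      ((1 + t ^ (n + 1)) / ((1 - t ^ 2) * (1 - t ^ n))) ∧
    HasSum
      (fun k : ℕ =>
        (if Even k then
          ((1 + (-1 : ℂ) ^ (k / 2)) / 2 + ((((k / 2) % (2 * n)) / n : ℕ) : ℂ) +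
            2 * (((k / 2) / (2 * n) : ℕ) : ℂ))
         else 0) * t ^ k)
      ((1 + t ^ (2 * n + 2)) / ((1 - t ^ 4) * (1 - t ^ (2 * n)))) := by
  have hn : n ≠ 0 := Nat.one_le_iff_ne_zero.mp hn
  refine ⟨hasSum_binaryDihedral_coeff_mul_pow hn ht, ?_⟩
  have hsq := hasSum_binaryDihedral_coeff_mul_pow hn (norm_pow_lt_one_s13 ht two_ne_zero)
  simp only [← pow_mul] at hsq
  rw [show 2 * (n + 1) = 2 * n + 2 by ring, show 2 * 2 = 4 by rfl] at hsq
  refine (hasSum_ite_even_div_two_iff.mpr hsq).congr_fun fun k => ?_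
  split_ifs with hk
  · rw [Nat.mul_div_cancel' hk.two_dvd]
  · rw [zero_mul]
end

section
/- Define N₀(x) = ∑_{r=1}^∞ 1/(e^{rx} − 1) for x > 0 (the series converges for every x > 0). Then N₀(x) is asymptotic to −(log x)/x as x → 0⁺; precisely, the function x ↦ (x·N₀(x))/(−log x) tends to 1 as x tends to 0 from the right. -/
/-!
Since `t ≤ 2 sinh (t/2)` and `e^t - 1 ≤ t e^t`, each term `x/(e^{rx} - 1)` is squeezed between
`e^{-rx}/r` and `e^{-rx/2}/r`. Summing over `r` gives
`-log (1 - e^{-x}) ≤ x N₀(x) ≤ -log (1 - e^{-x/2})`, and both logarithmic series are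
`-log x + O(1)` as `x → 0⁺`.
-/

open Filter Topology Real

lemma exp_neg_div_le_inv_exp_sub_one {t : ℝ} (ht : 0 < t) :
    exp (-t) / t ≤ (exp t - 1)⁻¹ := by
  have hpos : 0 < exp t - 1 := by linarith [add_one_lt_exp ht.ne']
  have key : exp t - 1 ≤ t * exp t := by
    have := add_one_le_exp (-t)
    rw [exp_neg] at this
    nlinarith [mul_inv_cancel₀ (exp_pos t).ne', exp_pos t]
  calc exp (-t) / t = (t * exp t)⁻¹ := by rw [exp_neg, mul_inv, div_eq_mul_inv, mul_comm]
    _ ≤ (exp t - 1)⁻¹ := inv_anti₀ hpos key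

lemma inv_exp_sub_one_le_exp_neg_half_div {t : ℝ} (ht : 0 < t) :
    (exp t - 1)⁻¹ ≤ exp (-(t / 2)) / t := by
  have hsinh : t ≤ 2 * sinh (t / 2) := by linarith [self_le_sinh_iff.mpr (half_pos ht).le]
  have hhalf : exp (t / 2) * exp (t / 2) = exp t := by rw [← exp_add, add_halves]
  calc (exp t - 1)⁻¹ = exp (-(t / 2)) / (2 * sinh (t / 2)) := by
        rw [sinh_eq, exp_neg, ← hhalf]; field_simp
    _ ≤ exp (-(t / 2)) / t := by gcongr

lemma hasSum_exp_neg_mul_div {y : ℝ} (hy : 0 < y) :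
    HasSum (fun n : ℕ => exp (-((n + 1) * y)) / (n + 1)) (-log (1 - exp (-y))) := by
  have hq : |exp (-y)| < 1 := by
    rw [abs_of_pos (exp_pos _)]; exact exp_lt_one_iff.mpr (by linarith)
  convert hasSum_pow_div_log_of_abs_lt_one hq using 2 with n
  rw [← exp_nat_mul]; push_cast; ring_nf

lemma neg_log_le_neg_log_one_sub_exp_neg {y : ℝ} (hy : 0 < y) :
    -log y ≤ -log (1 - exp (-y)) := by
  have h : 0 < 1 - exp (-y) := by linarith [exp_lt_one_iff.mpr (neg_neg_iff_pos.mpr hy)]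
  have := add_one_le_exp (-y)
  gcongr
  linarith

lemma neg_log_one_sub_exp_neg_le {y : ℝ} (hy : 0 < y) :
    -log (1 - exp (-y)) ≤ y - log y := by
  have h : y * exp (-y) ≤ 1 - exp (-y) := by
    have := add_one_le_exp y
    have hinv : exp y * exp (-y) = 1 := by rw [← exp_add]; simp
    nlinarith [exp_pos (-y)]
  have := log_le_log (by positivity) h
  rw [log_mul hy.ne' (exp_pos _).ne', log_exp] at this
  linarith

lemma mul_inv_exp_mul_sub_one_bounds {x : ℝ} (hx : 0 < x) (n : ℕ) :
    exp (-((n + 1) * x)) / (n + 1) ≤ x * (exp ((n + 1) * x) - 1)⁻¹ ∧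
      x * (exp ((n + 1) * x) - 1)⁻¹ ≤ exp (-((n + 1) * (x / 2))) / (n + 1) := by
  have ht : 0 < ((n : ℝ) + 1) * x := by positivity
  have hscale : ∀ a : ℝ, x * (a / ((n + 1) * x)) = a / (n + 1) := fun a => by
    field_simp
  constructor
  · rw [← hscale]
    exact mul_le_mul_of_nonneg_left (exp_neg_div_le_inv_exp_sub_one ht) hx.le
  · rw [← hscale, ← mul_div_assoc ((n : ℝ) + 1) x]
    exact mul_le_mul_of_nonneg_left (inv_exp_sub_one_le_exp_neg_half_div ht) hx.le

lemma summable_inv_exp_mul_sub_one {x : ℝ} (hx : 0 < x) :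
    Summable fun n : ℕ => (exp ((n + 1) * x) - 1)⁻¹ := by
  refine (summable_mul_left_iff hx.ne').mp ?_
  refine (hasSum_exp_neg_mul_div (half_pos hx)).summable.of_nonneg_of_le (fun n => ?_)
    (fun n => (mul_inv_exp_mul_sub_one_bounds hx n).2)
  have : 0 < exp ((n + 1) * x) - 1 := by
    linarith [one_lt_exp_iff.mpr (show 0 < ((n : ℝ) + 1) * x by positivity)]
  positivity

lemma neg_log_le_mul_tsum_inv_exp_mul_sub_one {x : ℝ} (hx : 0 < x) :
    -log x ≤ x * ∑' n : ℕ, (exp ((n + 1) * x) - 1)⁻¹ := by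
  rw [← tsum_mul_left]
  calc -log x ≤ -log (1 - exp (-x)) := neg_log_le_neg_log_one_sub_exp_neg hx
    _ ≤ _ := hasSum_le (fun n => (mul_inv_exp_mul_sub_one_bounds hx n).1)
        (hasSum_exp_neg_mul_div hx) ((summable_inv_exp_mul_sub_one hx).mul_left x).hasSum

lemma mul_tsum_inv_exp_mul_sub_one_le {x : ℝ} (hx : 0 < x) :
    x * ∑' n : ℕ, (exp ((n + 1) * x) - 1)⁻¹ ≤ -log x + (log 2 + x / 2) := by
  rw [← tsum_mul_left]
  calc _ ≤ -log (1 - exp (-(x / 2))) :=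
        hasSum_le (fun n => (mul_inv_exp_mul_sub_one_bounds hx n).2)
          ((summable_inv_exp_mul_sub_one hx).mul_left x).hasSum
          (hasSum_exp_neg_mul_div (half_pos hx))
    _ ≤ x / 2 - log (x / 2) := neg_log_one_sub_exp_neg_le (half_pos hx)
    _ = -log x + (log 2 + x / 2) := by
        rw [log_div hx.ne' two_ne_zero]; ring

lemma tendsto_div_one_of_le_of_le_add {α : Type*} {l : Filter α} {u v w : α → ℝ} {C : ℝ}
    (hv : Tendsto v l atTop) (hw : Tendsto w l (𝓝 C)) (hlo : ∀ᶠ a in l, v a ≤ u a)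
    (hhi : ∀ᶠ a in l, u a ≤ v a + w a) :
    Tendsto (fun a => u a / v a) l (𝓝 1) := by
  have hvpos : ∀ᶠ a in l, 0 < v a := hv.eventually_gt_atTop 0
  have hupper : Tendsto (fun a => 1 + w a / v a) l (𝓝 1) := by
    simpa using tendsto_const_nhds.add (hw.div_atTop hv)
  refine tendsto_of_tendsto_of_tendsto_of_le_of_le' tendsto_const_nhds hupper ?_ ?_
  · filter_upwards [hvpos, hlo] with a hpos h
    rwa [one_le_div hpos]
  · filter_upwards [hvpos, hhi] with a hpos h
    rwa [one_add_div hpos.ne', div_le_div_iff_of_pos_right hpos]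

/-- For `x > 0` the series `N₀(x) = ∑_{r=1}^∞ 1/(e^{rx} - 1)` converges, and
`N₀(x)` is asymptotic to `-(log x)/x` as `x → 0⁺`: the ratio
`x·N₀(x)/(-log x)` tends to `1` as `x` tends to `0` from the right. -/
theorem N0_asymptotic :
    (∀ x : ℝ, 0 < x → Summable fun r : ℕ => (Real.exp ((r + 1) * x) - 1)⁻¹) ∧
    Filter.Tendsto
      (fun x : ℝ => x * (∑' r : ℕ, (Real.exp ((r + 1) * x) - 1)⁻¹) / (-Real.log x))
      (nhdsWithin 0 (Set.Ioi 0)) (nhds 1) := by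
  refine ⟨fun x hx => summable_inv_exp_mul_sub_one hx, ?_⟩
  refine tendsto_div_one_of_le_of_le_add (w := fun x => log 2 + x / 2) (C := log 2 + 0 / 2)
    (tendsto_neg_atBot_atTop.comp tendsto_log_nhdsGT_zero) ?_ ?_ ?_
  · exact (tendsto_const_nhds.add (tendsto_id.div_const 2)).mono_left nhdsWithin_le_nhds
  · filter_upwards [self_mem_nhdsWithin] with x hx
    exact neg_log_le_mul_tsum_inv_exp_mul_sub_one hx
  · filter_upwards [self_mem_nhdsWithin] with x hx
    exact mul_tsum_inv_exp_mul_sub_one_le hx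
end

section
/- Let p ≥ 1 and let x, y, z ∈ ℂ be nonzero with x ≠ 1, x ≠ z, and x^a·y ≠ z^a for every integer a with 0 ≤ a ≤ p. Then ∑_{a=0}^{p−1} [ (1 − x)·(1 − x^a·y·z^{−a})·(1 − x^{−1−a}·z^{1+a}·y^{−1}) ]^{−1} = x·y·(z^p − x^p) / [ (1 − x)·(z − x)·(1 − y)·(x^p·y − z^p) ]. (This sums the contributions of the p triangles T_a A T_{a+1} of the toric diagram of Y^{p,q} adjacent to the vertex A, by telescoping.) -/
set_option maxHeartbeats 2000000


open scoped BigOperators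

/-- Telescoping sum over the triangles `T_a A T_{a+1}` of the toric diagram of
`Y^{p,q}` adjacent to the vertex `A`: for `p ≥ 1` and nonzero `x, y, z ∈ ℂ` with
`x ≠ 1`, `x ≠ z` and `x^a y ≠ z^a` for `0 ≤ a ≤ p`,
`∑_{a=0}^{p-1} [(1-x)(1 - x^a y z^{-a})(1 - x^{-1-a} z^{1+a} y^{-1})]⁻¹
  = x y (z^p - x^p)/((1-x)(z-x)(1-y)(x^p y - z^p))`. -/
theorem Ypq_triangles_A (p : ℕ) (hp : 1 ≤ p) (x y z : ℂ)
    (hx : x ≠ 0) (hy : y ≠ 0) (hz : z ≠ 0)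
    (hx1 : x ≠ 1) (hxz : x ≠ z)
    (h : ∀ a : ℕ, a ≤ p → x ^ a * y ≠ z ^ a) :
    ∑ a ∈ Finset.range p,
      ((1 - x) * (1 - x ^ a * y * (z ^ a)⁻¹) *
        (1 - x ^ (-(1 : ℤ) - (a : ℤ)) * z ^ (a + 1) * y⁻¹))⁻¹
    = x * y * (z ^ p - x ^ p) /
        ((1 - x) * (z - x) * (1 - y) * (x ^ p * y - z ^ p)) := by
  have hy1 : (1 : ℂ) - y ≠ 0 := by
    have := h 0 (Nat.zero_le _)
    simp only [pow_zero, one_mul] at this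
    exact fun hc => this (by linear_combination -hc)
  have hx1' : (1 : ℂ) - x ≠ 0 := sub_ne_zero.mpr (Ne.symm hx1)
  have hzx : z - x ≠ 0 := sub_ne_zero.mpr (fun hc => hxz hc.symm)
  have key : ∀ n, n ≤ p →
      ∑ a ∈ Finset.range n,
        ((1 - x) * (1 - x ^ a * y * (z ^ a)⁻¹) *
          (1 - x ^ (-(1 : ℤ) - (a : ℤ)) * z ^ (a + 1) * y⁻¹))⁻¹
      = x * y * (z ^ n - x ^ n) /
          ((1 - x) * (z - x) * (1 - y) * (x ^ n * y - z ^ n)) := by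
    intro n hn
    induction n with
    | zero => simp
    | succ m ih =>
      rw [Finset.sum_range_succ, ih (le_trans (Nat.le_succ m) hn)]
      have h1 : x ^ m * y - z ^ m ≠ 0 :=
        sub_ne_zero.mpr (h m (le_trans (Nat.le_succ m) hn))
      have h2 : x ^ (m + 1) * y - z ^ (m + 1) ≠ 0 :=
        sub_ne_zero.mpr (h (m + 1) hn)
      have hzm : (z : ℂ) ^ m ≠ 0 := pow_ne_zero _ hz
      have hxm1 : (x : ℂ) ^ (m + 1) ≠ 0 := pow_ne_zero _ hx
      have hzpow : x ^ (-(1 : ℤ) - (m : ℤ)) = (x ^ (m + 1))⁻¹ := by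
        have : (-(1 : ℤ) - (m : ℤ)) = -((m + 1 : ℕ) : ℤ) := by push_cast; ring
        rw [this, zpow_neg, zpow_natCast]
      rw [hzpow]
      have hd1 : 1 - x ^ m * y * (z ^ m)⁻¹ ≠ 0 := by
        intro hc
        apply h1
        have : x ^ m * y * (z ^ m)⁻¹ = 1 := by linear_combination -hc
        field_simp at this
        linear_combination this
      have hd2 : 1 - (x ^ (m + 1))⁻¹ * z ^ (m + 1) * y⁻¹ ≠ 0 := by
        intro hc
        apply h2
        have : (x ^ (m + 1))⁻¹ * z ^ (m + 1) * y⁻¹ = 1 := by linear_combination -hc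
        field_simp at this
        linear_combination -this
      have h1' : z ^ m - x ^ m * y ≠ 0 := fun hc => h1 (by linear_combination -hc)
      have hterm : (1 - x) * (1 - x ^ m * y * (z ^ m)⁻¹) *
          (1 - (x ^ (m + 1))⁻¹ * z ^ (m + 1) * y⁻¹)
          = ((1 - x) * (z ^ m - x ^ m * y) * (x ^ (m + 1) * y - z ^ (m + 1))) /
            (z ^ m * (x ^ (m + 1) * y)) := by
        field_simp
        try ring
      rw [hterm, inv_div]
      rw [div_add_div _ _
          (mul_ne_zero (mul_ne_zero (mul_ne_zero hx1' hzx) hy1) h1)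
          (mul_ne_zero (mul_ne_zero hx1' h1') h2),
        div_eq_div_iff
          (mul_ne_zero (mul_ne_zero (mul_ne_zero (mul_ne_zero hx1' hzx) hy1) h1)
            (mul_ne_zero (mul_ne_zero hx1' h1') h2))
          (mul_ne_zero (mul_ne_zero (mul_ne_zero hx1' hzx) hy1) h2)]
      ring
  exact key p le_rfl
end

section
/- Let p ≥ 1 and 0 ≤ q ≤ p be integers, and let x, y, z ∈ ℂ be nonzero with x ≠ 1, x·z ≠ 1, and x^{p−q−a}·y ≠ z^a (integer exponent p−q−a, possibly negative) for every integer a with 0 ≤ a ≤ p. Then ∑_{a=0}^{p−1} [ (1 − x^{−1})·(1 − x^{p−q−a}·y·z^{−a})·(1 − x^{1+a−p+q}·z^{1+a}·y^{−1}) ]^{−1} = x·y·(1 − x^p·z^p) / [ (1 − x)·(1 − x·z)·(1 − x^{p−q}·y)·(x^q·z^p − y) ]. (This sums the contributions of the p triangles T_a C T_{a+1} of the toric diagram of Y^{p,q} adjacent to the vertex C, by telescoping.) -/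
/-!
Put `c = x^{p-q} y` and `w = x z`, so that the two monomials in the `a`-th term are
`u_a = c / w^a` and `u_{a+1}⁻¹`, with `u_a = u_{a+1} w`. Partial fractions show that
`[(1 - x⁻¹)(1 - v w)(1 - v⁻¹)]⁻¹ = G(v) - G(v w)` for `G(v) = x v / ((1 - x)(1 - w)(1 - v))`,
so the sum telescopes to `G(u_p) - G(u_0)`, and `u_p = y / (x^q z^p)`, `u_0 = x^{p-q} y`.
-/

open Finset

section

variable {K : Type*} [Field K]

def trianglePrimitive (x w v : K) : K := x * v / ((1 - x) * (1 - w) * (1 - v))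

theorem inv_triangle_eq_trianglePrimitive_sub {x w v : K} (hx : x ≠ 0) (hv : v ≠ 0)
    (hx1 : x ≠ 1) (hw1 : w ≠ 1) (hv1 : v ≠ 1) (hvw1 : v * w ≠ 1) :
    ((1 - x⁻¹) * (1 - v * w) * (1 - v⁻¹))⁻¹
      = trianglePrimitive x w v - trianglePrimitive x w (v * w) := by
  have := sub_ne_zero.2 hx1.symm
  have := sub_ne_zero.2 hw1.symm
  have := sub_ne_zero.2 hv1.symm
  have := sub_ne_zero.2 hvw1.symm
  unfold trianglePrimitive
  field_simp
  ring

theorem sum_range_inv_triangle {x w c : K} (n : ℕ) (hx : x ≠ 0) (hw : w ≠ 0) (hc : c ≠ 0)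
    (hx1 : x ≠ 1) (hw1 : w ≠ 1) (h : ∀ a ≤ n, c / w ^ a ≠ 1) :
    ∑ a ∈ range n, ((1 - x⁻¹) * (1 - c / w ^ a) * (1 - (c / w ^ (a + 1))⁻¹))⁻¹
      = trianglePrimitive x w (c / w ^ n) - trianglePrimitive x w c := by
  have hshift (a : ℕ) : c / w ^ (a + 1) * w = c / w ^ a := by
    field_simp
    ring
  calc _ = ∑ a ∈ range n, (trianglePrimitive x w (c / w ^ (a + 1))
              - trianglePrimitive x w (c / w ^ a)) := by
        refine sum_congr rfl fun a ha => ?_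
        have ha := mem_range.1 ha
        rw [← hshift, inv_triangle_eq_trianglePrimitive_sub hx (by positivity) hx1 hw1
          (h _ ha) (hshift a ▸ h a ha.le)]
    _ = _ := by rw [sum_range_sub (fun a => trianglePrimitive x w (c / w ^ a)), pow_zero, div_one]

theorem trianglePrimitive_div_sub {x w X B y : K} (hB : B ≠ 0) (hx1 : x ≠ 1) (hw1 : w ≠ 1)
    (hXy : X * y ≠ 1) (hyB : y ≠ B) :
    trianglePrimitive x w (y / B) - trianglePrimitive x w (X * y)
      = x * y * (1 - X * B) / ((1 - x) * (1 - w) * (1 - X * y) * (B - y)) := by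
  have := sub_ne_zero.2 hx1.symm
  have := sub_ne_zero.2 hw1.symm
  have : 1 - y * X ≠ 0 := sub_ne_zero.2 (mul_comm X y ▸ hXy).symm
  have := sub_ne_zero.2 hyB.symm
  unfold trianglePrimitive
  field_simp
  ring

theorem pow_mul_div_mul_pow_eq_zpow_sub {x z : K} (hx : x ≠ 0) (y : K) (n m : ℕ) :
    x ^ n * y / (x * z) ^ m = x ^ ((n : ℤ) - m) * y * (z ^ m)⁻¹ := by
  rw [zpow_sub₀ hx, zpow_natCast, zpow_natCast, mul_pow]
  field_simp

end

theorem Ypq_triangles_C_general (p q : ℕ) (hq : q ≤ p) (x y z : ℂ)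
    (hx : x ≠ 0) (hy : y ≠ 0) (hz : z ≠ 0)
    (hx1 : x ≠ 1) (hxz : x * z ≠ 1)
    (h : ∀ a : ℕ, a ≤ p → x ^ ((p : ℤ) - (q : ℤ) - (a : ℤ)) * y ≠ z ^ a) :
    ∑ a ∈ Finset.range p,
      ((1 - x⁻¹) * (1 - x ^ ((p : ℤ) - (q : ℤ) - (a : ℤ)) * y * (z ^ a)⁻¹) *
        (1 - x ^ (1 + (a : ℤ) - (p : ℤ) + (q : ℤ)) * z ^ (a + 1) * y⁻¹))⁻¹
    = x * y * (1 - x ^ p * z ^ p) /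
        ((1 - x) * (1 - x * z) * (1 - x ^ (p - q) * y) * (x ^ q * z ^ p - y)) := by
  set c := x ^ (p - q) * y
  have hc (a : ℕ) : c / (x * z) ^ a = x ^ ((p : ℤ) - q - a) * y * (z ^ a)⁻¹ := by
    rw [pow_mul_div_mul_pow_eq_zpow_sub hx, Nat.cast_sub hq]
  have hc' (a : ℕ) :
      x ^ (1 + (a : ℤ) - p + q) * z ^ (a + 1) * y⁻¹ = (c / (x * z) ^ (a + 1))⁻¹ := by
    rw [hc, show 1 + (a : ℤ) - p + q = -((p : ℤ) - q - ((a + 1 : ℕ) : ℤ)) by push_cast; ring,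
      zpow_neg]
    field_simp
  have hne (a : ℕ) (ha : a ≤ p) : c / (x * z) ^ a ≠ 1 := by
    rw [hc, ← div_eq_mul_inv, ne_eq, div_eq_one_iff_eq (pow_ne_zero _ hz)]
    exact h a ha
  have hxp : x ^ p = x ^ (p - q) * x ^ q := by rw [← pow_add, Nat.sub_add_cancel hq]
  have hcp : c / (x * z) ^ p = y / (x ^ q * z ^ p) := by
    simp only [c, mul_pow, hxp]
    field_simp
  have hB : x ^ q * z ^ p ≠ 0 := by positivity
  have hyB : y ≠ x ^ q * z ^ p := by
    simpa [hcp, div_eq_one_iff_eq hB] using hne p le_rfl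
  simp_rw [← hc, hc']
  rw [sum_range_inv_triangle p hx (mul_ne_zero hx hz) (by positivity) hx1 hxz hne, hcp,
    show x ^ p * z ^ p = x ^ (p - q) * (x ^ q * z ^ p) by rw [hxp]; ring]
  exact trianglePrimitive_div_sub hB hx1 hxz (by simpa using hne 0 p.zero_le) hyB

/-- Telescoping sum over the triangles `T_a C T_{a+1}` of the toric diagram of
`Y^{p,q}` adjacent to the vertex `C`: for `1 ≤ p`, `q ≤ p` and nonzero
`x, y, z ∈ ℂ` with `x ≠ 1`, `x z ≠ 1` and `x^{p-q-a} y ≠ z^a` for `0 ≤ a ≤ p`,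
`∑_{a=0}^{p-1} [(1 - x⁻¹)(1 - x^{p-q-a} y z^{-a})(1 - x^{1+a-p+q} z^{1+a} y^{-1})]⁻¹
  = x y (1 - x^p z^p)/((1-x)(1-xz)(1 - x^{p-q} y)(x^q z^p - y))`. -/
theorem Ypq_triangles_C (p q : ℕ) (hp : 1 ≤ p) (hq : q ≤ p) (x y z : ℂ)
    (hx : x ≠ 0) (hy : y ≠ 0) (hz : z ≠ 0)
    (hx1 : x ≠ 1) (hxz : x * z ≠ 1)
    (h : ∀ a : ℕ, a ≤ p → x ^ ((p : ℤ) - (q : ℤ) - (a : ℤ)) * y ≠ z ^ a) :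
    ∑ a ∈ Finset.range p,
      ((1 - x⁻¹) * (1 - x ^ ((p : ℤ) - (q : ℤ) - (a : ℤ)) * y * (z ^ a)⁻¹) *
        (1 - x ^ (1 + (a : ℤ) - (p : ℤ) + (q : ℤ)) * z ^ (a + 1) * y⁻¹))⁻¹
    = x * y * (1 - x ^ p * z ^ p) /
        ((1 - x) * (1 - x * z) * (1 - x ^ (p - q) * y) * (x ^ q * z ^ p - y)) :=
  Ypq_triangles_C_general p q hq x y z hx hy hz hx1 hxz h
end

section
/- Let p ≥ 1 and 0 ≤ q ≤ p be integers, and let x, y, z ∈ ℂ be nonzero with x ≠ 1, x ≠ z, x·z ≠ 1, x^a·y ≠ z^a for all 0 ≤ a ≤ p, and x^{p−q−a}·y ≠ z^a (integer exponent) for all 0 ≤ a ≤ p. Then the Hilbert series of Y^{p,q}, defined as the sum over a = 0,…,p−1 of [ (1−x)(1 − x^a y z^{−a})(1 − x^{−1−a} z^{1+a} y^{−1}) ]^{−1} + [ (1−x^{−1})(1 − x^{p−q−a} y z^{−a})(1 − x^{1+a−p+q} z^{1+a} y^{−1}) ]^{−1}, equals (x·y/(1−x)) · [ (1 − x^p z^p)/((1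 − x z)(1 − x^{p−q} y)(x^q z^p − y)) + (z^p − x^p)/((z − x)(1 − y)(x^p y − z^p)) ]. -/
/-!
Both families of triangle contributions have the shape `(c (1 - U a) (1 - (U (a + 1))⁻¹))⁻¹`,
where `U` is a geometric progression: `U a = (x / z) ^ a * y` for the triangles `T_a A T_{a+1}` and
`U a = (x z)⁻¹ ^ a * x ^ (p - q) * y` for the triangles `T_a C T_{a+1}`. A partial fraction
decomposition writes such a term as a constant multiple of `(1 - U a)⁻¹ - (1 - U (a + 1))⁻¹`,
so each family telescopes to its boundary terms at `a = 0` and `a = p`, and the four boundary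
terms add up to the closed form.
-/

open Finset

section Field

variable {K : Type*} [Field K]

theorem inv_mul_one_sub_mul_one_sub_inv (c : K) {t U : K} (ht0 : t ≠ 0) (ht1 : t ≠ 1)
    (hU0 : U ≠ 0) (hU1 : U ≠ 1) (htU : t * U ≠ 1) :
    (c * (1 - U) * (1 - (t * U)⁻¹))⁻¹ = t / ((t - 1) * c) * ((1 - U)⁻¹ - (1 - t * U)⁻¹) := by
  rcases eq_or_ne c 0 with rfl | hc
  · simp
  have : t - 1 ≠ 0 := sub_ne_zero.2 ht1
  have : 1 - U ≠ 0 := sub_ne_zero.2 hU1.symm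
  have : 1 - U * t ≠ 0 := sub_ne_zero.2 (mul_comm t U ▸ htU).symm
  rw [show 1 - (t * U)⁻¹ = -(1 - t * U) / (t * U) by field_simp; ring]
  field_simp
  ring

theorem sum_range_inv_mul_one_sub_mul_one_sub_inv (c : K) {t u : K} (n : ℕ) (ht0 : t ≠ 0)
    (ht1 : t ≠ 1) (hu : u ≠ 0) (h : ∀ a ≤ n, t ^ a * u ≠ 1) :
    ∑ a ∈ range n, (c * (1 - t ^ a * u) * (1 - (t ^ (a + 1) * u)⁻¹))⁻¹ =
      t / ((t - 1) * c) * ((1 - u)⁻¹ - (1 - t ^ n * u)⁻¹) := by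
  have hterm : ∀ a ∈ range n, (c * (1 - t ^ a * u) * (1 - (t ^ (a + 1) * u)⁻¹))⁻¹ =
      t / ((t - 1) * c) * ((1 - t ^ a * u)⁻¹ - (1 - t ^ (a + 1) * u)⁻¹) := by
    intro a ha
    have ha := mem_range.1 ha
    simp_rw [pow_succ', mul_assoc t]
    exact inv_mul_one_sub_mul_one_sub_inv c ht0 ht1 (by positivity) (h a ha.le)
      (by simpa [pow_succ', mul_assoc] using h (a + 1) ha)
  rw [sum_congr rfl hterm, ← mul_sum, sum_range_sub' (fun a => (1 - t ^ a * u)⁻¹), pow_zero,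
    one_mul]

variable {x y z : K}

theorem pow_mul_mul_inv_pow (a : ℕ) : x ^ a * y * (z ^ a)⁻¹ = (x / z) ^ a * y := by
  rw [div_pow]
  ring

theorem zpow_neg_one_sub_mul_pow_succ_mul_inv (a : ℕ) :
    x ^ (-1 - (a : ℤ)) * z ^ (a + 1) * y⁻¹ = ((x / z) ^ (a + 1) * y)⁻¹ := by
  rw [show -1 - (a : ℤ) = -((a + 1 : ℕ) : ℤ) by push_cast; ring, zpow_neg, zpow_natCast,
    div_pow, mul_inv, inv_div]
  ring

theorem zpow_sub_mul_mul_inv_pow (hx : x ≠ 0) (n : ℤ) (a : ℕ) :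
    x ^ (n - a) * y * (z ^ a)⁻¹ = (x * z)⁻¹ ^ a * (x ^ n * y) := by
  rw [zpow_sub₀ hx, zpow_natCast, inv_pow, mul_pow]
  field_simp

theorem zpow_one_add_sub_mul_pow_succ_mul_inv (hx : x ≠ 0) (n : ℤ) (a : ℕ) :
    x ^ (1 + (a : ℤ) - n) * z ^ (a + 1) * y⁻¹ = ((x * z)⁻¹ ^ (a + 1) * (x ^ n * y))⁻¹ := by
  rw [show 1 + (a : ℤ) - n = -(n - (a + 1 : ℕ)) by push_cast; ring, zpow_neg,
    ← zpow_sub_mul_mul_inv_pow hx]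
  simp only [mul_inv, inv_inv]
  ring

theorem Ypq_boundary_terms_eq {p q : ℕ} (hq : q ≤ p) (hx : x ≠ 0) (hz : z ≠ 0) (hx1 : x ≠ 1)
    (hxz : x ≠ z) (hy1 : y ≠ 1) (hA : x ^ p * y ≠ z ^ p) (hC0 : x ^ (p - q) * y ≠ 1)
    (hC : (x * z)⁻¹ ^ p * (x ^ (p - q) * y) ≠ 1) :
    x / z / ((x / z - 1) * (1 - x)) * ((1 - y)⁻¹ - (1 - (x / z) ^ p * y)⁻¹) +
        (x * z)⁻¹ / (((x * z)⁻¹ - 1) * (1 - x⁻¹)) *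
          ((1 - x ^ (p - q) * y)⁻¹ - (1 - (x * z)⁻¹ ^ p * (x ^ (p - q) * y))⁻¹) =
      (x * y / (1 - x)) *
        ((1 - x ^ p * z ^ p) /
            ((1 - x * z) * (1 - x ^ (p - q) * y) * (x ^ q * z ^ p - y)) +
          (z ^ p - x ^ p) / ((z - x) * (1 - y) * (x ^ p * y - z ^ p))) := by
  have hpq : x ^ p = x ^ (p - q) * x ^ q := by rw [← pow_add, Nat.sub_add_cancel hq]
  have hM : x ^ (p - q) ≠ 0 := pow_ne_zero _ hx
  have hP : x ^ q ≠ 0 := pow_ne_zero _ hx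
  have hZ : z ^ p ≠ 0 := pow_ne_zero _ hz
  rw [hpq] at hA
  rw [inv_pow, mul_pow, hpq] at hC
  rw [div_pow, inv_pow, mul_pow, hpq]
  generalize x ^ (p - q) = M at *
  generalize x ^ q = P at *
  generalize z ^ p = Z at *
  -- `field_simp` only discharges side conditions stated in its own normal form
  have hC0 : y * M ≠ 1 := by rwa [mul_comm]
  have hA : y * M * P ≠ Z := by rwa [mul_comm, ← mul_assoc] at hA
  have hC : P * Z ≠ y := fun h => hC (by rw [← h]; field_simp)
  field_simp [hA.symm]
  ring

end Field

theorem Ypq_hilbert_series_general (p q : ℕ) (hq : q ≤ p) (x y z : ℂ)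
    (hx : x ≠ 0) (hy : y ≠ 0) (hz : z ≠ 0)
    (hx1 : x ≠ 1) (hxz : x ≠ z) (hxz1 : x * z ≠ 1)
    (hA : ∀ a : ℕ, a ≤ p → x ^ a * y ≠ z ^ a)
    (hC : ∀ a : ℕ, a ≤ p → x ^ ((p : ℤ) - (q : ℤ) - (a : ℤ)) * y ≠ z ^ a) :
    ∑ a ∈ Finset.range p,
      (((1 - x) * (1 - x ^ a * y * (z ^ a)⁻¹) *
          (1 - x ^ (-(1 : ℤ) - (a : ℤ)) * z ^ (a + 1) * y⁻¹))⁻¹ +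
        ((1 - x⁻¹) * (1 - x ^ ((p : ℤ) - (q : ℤ) - (a : ℤ)) * y * (z ^ a)⁻¹) *
          (1 - x ^ (1 + (a : ℤ) - (p : ℤ) + (q : ℤ)) * z ^ (a + 1) * y⁻¹))⁻¹)
    = (x * y / (1 - x)) *
        ((1 - x ^ p * z ^ p) /
            ((1 - x * z) * (1 - x ^ (p - q) * y) * (x ^ q * z ^ p - y)) +
          (z ^ p - x ^ p) / ((z - x) * (1 - y) * (x ^ p * y - z ^ p))) := by
  have hn : (p : ℤ) - q = (p - q : ℕ) := by omega
  have hA_ne (a : ℕ) (ha : a ≤ p) : (x / z) ^ a * y ≠ 1 := by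
    rw [← pow_mul_mul_inv_pow, Ne, mul_inv_eq_one₀ (pow_ne_zero a hz)]
    exact hA a ha
  have hC_ne (a : ℕ) (ha : a ≤ p) : (x * z)⁻¹ ^ a * (x ^ (p - q) * y) ≠ 1 := by
    rw [← zpow_natCast x (p - q), ← hn, ← zpow_sub_mul_mul_inv_pow hx, Ne,
      mul_inv_eq_one₀ (pow_ne_zero a hz)]
    exact hC a ha
  have hshift (a : ℕ) : 1 + (a : ℤ) - p + q = 1 + a - (p - q : ℕ) := by omega
  simp_rw [hshift, hn, pow_mul_mul_inv_pow, zpow_neg_one_sub_mul_pow_succ_mul_inv,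
    zpow_sub_mul_mul_inv_pow hx, zpow_one_add_sub_mul_pow_succ_mul_inv hx, zpow_natCast,
    sum_add_distrib]
  rw [sum_range_inv_mul_one_sub_mul_one_sub_inv _ p (div_ne_zero hx hz)
      ((div_eq_one_iff_eq hz).not.2 hxz) hy hA_ne,
    sum_range_inv_mul_one_sub_mul_one_sub_inv _ p (inv_ne_zero (mul_ne_zero hx hz))
      (inv_ne_one.2 hxz1) (by positivity) hC_ne]
  exact Ypq_boundary_terms_eq hq hx hz hx1 hxz (by simpa using hA 0 p.zero_le)
    (hA p le_rfl) (by simpa using hC_ne 0 p.zero_le) (hC_ne p le_rfl)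

/-- The Hilbert series of `Y^{p,q}`: the sum over the `2p` triangles of the
toric diagram of their simple rational contributions equals
`(x y/(1-x)) · [(1 - x^p z^p)/((1-xz)(1 - x^{p-q} y)(x^q z^p - y))
  + (z^p - x^p)/((z-x)(1-y)(x^p y - z^p))]`. -/
theorem Ypq_hilbert_series (p q : ℕ) (hp : 1 ≤ p) (hq : q ≤ p) (x y z : ℂ)
    (hx : x ≠ 0) (hy : y ≠ 0) (hz : z ≠ 0)
    (hx1 : x ≠ 1) (hxz : x ≠ z) (hxz1 : x * z ≠ 1)
    (hA : ∀ a : ℕ, a ≤ p → x ^ a * y ≠ z ^ a)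
    (hC : ∀ a : ℕ, a ≤ p → x ^ ((p : ℤ) - (q : ℤ) - (a : ℤ)) * y ≠ z ^ a) :
    ∑ a ∈ Finset.range p,
      (((1 - x) * (1 - x ^ a * y * (z ^ a)⁻¹) *
          (1 - x ^ (-(1 : ℤ) - (a : ℤ)) * z ^ (a + 1) * y⁻¹))⁻¹ +
        ((1 - x⁻¹) * (1 - x ^ ((p : ℤ) - (q : ℤ) - (a : ℤ)) * y * (z ^ a)⁻¹) *
          (1 - x ^ (1 + (a : ℤ) - (p : ℤ) + (q : ℤ)) * z ^ (a + 1) * y⁻¹))⁻¹)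
    = (x * y / (1 - x)) *
        ((1 - x ^ p * z ^ p) /
            ((1 - x * z) * (1 - x ^ (p - q) * y) * (x ^ q * z ^ p - y)) +
          (z ^ p - x ^ p) / ((z - x) * (1 - y) * (x ^ p * y - z ^ p))) :=
  Ypq_hilbert_series_general p q hq x y z hx hy hz hx1 hxz hxz1 hA hC
end
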